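/- arXiv:2402.12562 — 10 statements merged into one kernel-verified Lean document; each statement's English description precedes it below -/
import Mathlib

section
/- Fix integers 1 ≤ t1 ≤ T, a starting reference price r ∈ [0,p̄], and gain-seeking reference effects η⁺ ≥ η⁻ ≥ 0. For every price sequence p = (p_t)_{t=t1}^{T} with values in [0,p̄], the non-increasing rearrangement q of p satisfies V^q(r,t1) ≥ V^p(r,t1). In particular, for gain-seeking customers the optimal value V*(r,t1) equals the supremum of V^q(r,t1) over non-increasing sequences q in [0,p̄]^{T−t1+1}. -/
/-- ARM reference price at time `t`, starting from reference price `r` at time `t1`: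
`r_t = (t1·r + Σ_{s=t1}^{t−1} p_s)/t`. -/
noncomputable def armRef (t1 : ℕ) (r : ℝ) (p : ℕ → ℝ) (t : ℕ) : ℝ :=
  ((t1 : ℝ) * r + ∑ s ∈ Finset.Ico t1 t, p s) / (t : ℝ)

/-- Single-round expected revenue `Π(x, r)` with base demand `H` and reference effects. -/
noncomputable def armRev (H : ℝ → ℝ) (ηp ηm : ℝ) (x r : ℝ) : ℝ :=
  x * (H x + ηp * max (r - x) 0 - ηm * max (x - r) 0)

/-- Total ARM revenue `V^p(r, t1)` of price sequence `p` over rounds `t1..T`. -/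
noncomputable def armV (H : ℝ → ℝ) (ηp ηm : ℝ) (t1 T : ℕ) (r : ℝ) (p : ℕ → ℝ) : ℝ :=
  ∑ t ∈ Finset.Icc t1 T, armRev H ηp ηm (p t) (armRef t1 r p t)

/-- Optimal ARM revenue `V*(r, t1)`: supremum over all price sequences valued in `[0, p̄]`. -/
noncomputable def armVStar (H : ℝ → ℝ) (ηp ηm : ℝ) (t1 T : ℕ) (pbar r : ℝ) : ℝ :=
  sSup {x : ℝ | ∃ p : ℕ → ℝ,
    (∀ t ∈ Finset.Icc t1 T, p t ∈ Set.Icc 0 pbar) ∧ x = armV H ηp ηm t1 T r p}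

/-! Swapping an adjacent ascent `a = p s < p (s + 1) = b` changes no other round's reference price,
since the ARM reference only sees the sum of the earlier prices. With `ρ = r_s`, `θ = 1 / (s + 1)`
and `Π(x, r) = x H x + (η⁺ - η⁻) x (r - x)⁺ + η⁻ x (r - x)`, the revenue of rounds `s, s + 1`
grows by `(η⁺ - η⁻)` times an exchange gain of `x (r - x)⁺`, which is nonnegative, plus
`η⁻ θ ρ (b - a) ≥ 0`. Among the finitely many rearrangements of `p` that do at least as well as
`p`, one minimising the potential `∑ t · p t` therefore has no ascent: swapping one would stay in
the family and lower the potential by `b - a`. -/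

open Finset Equiv

theorem Finset.sum_sub_sum_eq_of_eqOn_sdiff_pair {ι M : Type*} [DecidableEq ι]
    [AddCommGroup M] {I : Finset ι} {a b : ι} (hab : a ≠ b) (ha : a ∈ I) (hb : b ∈ I)
    {f g : ι → M} (hfg : ∀ t ∈ I, t ≠ a → t ≠ b → f t = g t) :
    ∑ t ∈ I, f t - ∑ t ∈ I, g t = f a + f b - (g a + g b) := by
  have hsub : {a, b} ⊆ I := insert_subset ha (singleton_subset_iff.2 hb)
  rw [← sum_sub_distrib, ← sum_subset hsub, sum_pair hab]
  · abel
  · intro t ht hnot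
    simp only [mem_insert, mem_singleton, not_or] at hnot
    rw [hfg t ht hnot.1 hnot.2, sub_self]

theorem Finset.sum_natCast_mul_comp_swap {I : Finset ℕ} {s : ℕ} (hs : s ∈ I)
    (hs1 : s + 1 ∈ I) (q : ℕ → ℝ) :
    ∑ t ∈ I, (t : ℝ) * (q ∘ swap s (s + 1)) t =
      ∑ t ∈ I, (t : ℝ) * q t + (q s - q (s + 1)) := by
  have := sum_sub_sum_eq_of_eqOn_sdiff_pair (by omega : s ≠ s + 1) hs hs1
    (f := fun t => (t : ℝ) * q (swap s (s + 1) t)) (g := fun t => (t : ℝ) * q t)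
    fun t _ hts hts1 => by rw [swap_apply_of_ne_of_ne hts hts1]
  simp only [swap_apply_left, swap_apply_right] at this
  push_cast at this
  simp only [Function.comp_apply]
  linarith

theorem Equiv.Perm.finite_setOf_eqOn_compl {α : Type*} [DecidableEq α] (I : Finset α) :
    {σ : Perm α | ∀ a ∉ I, σ a = a}.Finite :=
  Set.finite_coe_iff.1 (Finite.of_equiv _ (Perm.subtypeEquivSubtypePerm (· ∈ I)))

theorem Equiv.Perm.apply_mem_of_eqOn_compl {α : Type*} {I : Finset α} {σ : Perm α}
    (hσ : ∀ a ∉ I, σ a = a) {a : α} (ha : a ∈ I) : σ a ∈ I := by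
  by_contra h
  rw [σ.injective (hσ _ h)] at h
  exact h ha

namespace ARM

theorem gain_exchange {a b ρ θ : ℝ} (ha : 0 ≤ a) (hab : a ≤ b) (hθ0 : 0 ≤ θ) (hθ1 : θ ≤ 1) :
    a * max (ρ - a) 0 + b * max ((1 - θ) * ρ + θ * a - b) 0 ≤
      b * max (ρ - b) 0 + a * max ((1 - θ) * ρ + θ * b - a) 0 := by
  have hb : 0 ≤ b := ha.trans hab
  have hbθ : 0 ≤ max (ρ - b) 0 * (b - a * θ) :=
    mul_nonneg (le_max_right _ _) (by nlinarith)
  rcases max_cases (ρ - a) 0 with ⟨e1, h1⟩ | ⟨e1, h1⟩ <;>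
  rcases max_cases (ρ - b) 0 with ⟨e2, h2⟩ | ⟨e2, h2⟩ <;>
  rcases max_cases ((1 - θ) * ρ + θ * a - b) 0 with ⟨e3, h3⟩ | ⟨e3, h3⟩ <;>
  rcases max_cases ((1 - θ) * ρ + θ * b - a) 0 with ⟨e4, h4⟩ | ⟨e4, h4⟩ <;>
  rw [e1, e2, e3, e4] <;> rw [e2] at hbθ <;>
  nlinarith [mul_nonneg ha hθ0, mul_nonneg hb hθ0, mul_nonneg (sub_nonneg.2 hab) hθ0,
    mul_nonneg (sub_nonneg.2 hab) (sub_nonneg.2 hθ1), mul_nonneg ha (sub_nonneg.2 hab)]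

theorem armRev_eq (H : ℝ → ℝ) (ηp ηm x r : ℝ) :
    armRev H ηp ηm x r = x * H x + (ηp - ηm) * (x * max (r - x) 0) + ηm * (x * (r - x)) := by
  rcases le_total x r with h | h
  · rw [armRev, max_eq_left (sub_nonneg.2 h), max_eq_right (sub_nonpos.2 h)]; ring
  · rw [armRev, max_eq_right (sub_nonpos.2 h), max_eq_left (sub_nonneg.2 h)]; ring

theorem armRev_exchange (H : ℝ → ℝ) {ηp ηm a b ρ θ : ℝ} (hηm : 0 ≤ ηm) (hη : ηm ≤ ηp)
    (ha : 0 ≤ a) (hab : a ≤ b) (hρ : 0 ≤ ρ) (hθ0 : 0 ≤ θ) (hθ1 : θ ≤ 1) :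
    armRev H ηp ηm a ρ + armRev H ηp ηm b ((1 - θ) * ρ + θ * a) ≤
      armRev H ηp ηm b ρ + armRev H ηp ηm a ((1 - θ) * ρ + θ * b) := by
  have gain := mul_le_mul_of_nonneg_left (gain_exchange (ρ := ρ) ha hab hθ0 hθ1)
    (sub_nonneg.2 hη)
  -- the `ηm`-linear parts of the two sides differ by exactly this amount
  have loss : 0 ≤ ηm * θ * ρ * (b - a) := by have := sub_nonneg.2 hab; positivity
  simp only [armRev_eq]
  nlinarith

theorem natCast_mul_armRef {t1 t : ℕ} (r : ℝ) (p : ℕ → ℝ) (h : t1 ≤ t) :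
    (t : ℝ) * armRef t1 r p t = t1 * r + ∑ s ∈ Ico t1 t, p s := by
  rcases Nat.eq_zero_or_pos t with rfl | ht
  · obtain rfl : t1 = 0 := Nat.le_zero.1 h
    simp
  · rw [armRef, mul_div_cancel₀ _ (by positivity)]

theorem armRef_succ {t1 t : ℕ} (r : ℝ) (p : ℕ → ℝ) (h : t1 ≤ t) :
    armRef t1 r p (t + 1) =
      (1 - 1 / (t + 1 : ℝ)) * armRef t1 r p t + 1 / (t + 1 : ℝ) * p t := by
  have := natCast_mul_armRef r p h
  rw [armRef, sum_Ico_succ_top h, ← add_assoc, ← this]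
  field_simp
  push_cast
  ring

theorem armRef_nonneg {t1 t : ℕ} {r : ℝ} {p : ℕ → ℝ} (hr : 0 ≤ r)
    (hp : ∀ s ∈ Ico t1 t, 0 ≤ p s) : 0 ≤ armRef t1 r p t :=
  div_nonneg (add_nonneg (by positivity) (sum_nonneg hp)) t.cast_nonneg

theorem armRef_comp_swap {t1 s t : ℕ} (r : ℝ) (p : ℕ → ℝ) (hs : t1 ≤ s) (ht : t ≠ s + 1) :
    armRef t1 r (p ∘ swap s (s + 1)) t = armRef t1 r p t := by
  rw [armRef, armRef]
  congr 2
  rcases lt_or_gt_of_ne ht with ht | ht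
  · refine sum_congr rfl fun x hx => ?_
    rw [mem_Ico] at hx
    rw [Function.comp_apply, swap_apply_of_ne_of_ne (by omega) (by omega)]
  · refine Perm.sum_comp _ _ _ fun x hx => ?_
    have hx' : x = s ∨ x = s + 1 := by
      by_contra! hne
      exact hx (swap_apply_of_ne_of_ne hne.1 hne.2)
    rw [coe_Ico, Set.mem_Ico]
    omega

theorem armV_le_armV_comp_swap (H : ℝ → ℝ) {ηp ηm : ℝ} (hηm : 0 ≤ ηm) (hη : ηm ≤ ηp)
    {t1 T s : ℕ} {r : ℝ} {p : ℕ → ℝ} (hr : 0 ≤ r) (hp : ∀ t ∈ Icc t1 T, 0 ≤ p t)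
    (hs : t1 ≤ s) (hsT : s + 1 ≤ T) (hasc : p s ≤ p (s + 1)) :
    armV H ηp ηm t1 T r p ≤ armV H ηp ηm t1 T r (p ∘ swap s (s + 1)) := by
  have hρ : 0 ≤ armRef t1 r p s := armRef_nonneg hr fun x hx =>
    hp x (by simp only [mem_Ico, mem_Icc] at hx ⊢; omega)
  have hθ1 : 1 / (s + 1 : ℝ) ≤ 1 :=
    div_le_one_of_le₀ (by linarith [s.cast_nonneg (α := ℝ)]) (by positivity)
  have hdiff := sum_sub_sum_eq_of_eqOn_sdiff_pair (I := Icc t1 T)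
    (f := fun t => armRev H ηp ηm (p (swap s (s + 1) t)) (armRef t1 r (p ∘ swap s (s + 1)) t))
    (g := fun t => armRev H ηp ηm (p t) (armRef t1 r p t)) (by omega : s ≠ s + 1)
    (mem_Icc.2 ⟨hs, by omega⟩) (mem_Icc.2 ⟨by omega, hsT⟩) fun t _ hts hts1 => by
      rw [swap_apply_of_ne_of_ne hts hts1, armRef_comp_swap r p hs hts1]
  simp only [Function.comp_apply, swap_apply_left, swap_apply_right,
    armRef_comp_swap r p hs (by omega : s ≠ s + 1), armRef_succ _ _ hs] at hdiff
  have hex := armRev_exchange H hηm hη (hp s (mem_Icc.2 ⟨hs, by omega⟩)) hasc hρ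
    (by positivity) hθ1
  simp only [armV, Function.comp_apply]
  linarith

theorem exists_perm_antitoneOn_armV_le (H : ℝ → ℝ) {ηp ηm : ℝ} (hηm : 0 ≤ ηm) (hη : ηm ≤ ηp)
    {t1 T : ℕ} {r : ℝ} {p : ℕ → ℝ} (hr : 0 ≤ r) (hp : ∀ t ∈ Icc t1 T, 0 ≤ p t) :
    ∃ σ : Perm ℕ, (∀ t ∉ Icc t1 T, σ t = t) ∧ AntitoneOn (p ∘ σ) ↑(Icc t1 T) ∧
      armV H ηp ηm t1 T r p ≤ armV H ηp ηm t1 T r (p ∘ σ) := by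
  set S := {σ : Perm ℕ | (∀ t ∉ Icc t1 T, σ t = t) ∧
    armV H ηp ηm t1 T r p ≤ armV H ηp ηm t1 T r (p ∘ σ)}
  have hS : S.Finite := (Perm.finite_setOf_eqOn_compl _).subset fun σ hσ => hσ.1
  obtain ⟨σ, ⟨hfix, hle⟩, hmin⟩ := S.exists_min_image
    (fun σ => ∑ t ∈ Icc t1 T, (t : ℝ) * (p ∘ σ) t) hS ⟨1, fun _ _ => rfl, le_rfl⟩
  refine ⟨σ, hfix, ?_, hle⟩
  rw [coe_Icc]
  refine antitoneOn_of_add_one_le Set.ordConnected_Icc fun s _ hs hs1 => ?_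
  by_contra! hasc
  have hs' : s ∈ Icc t1 T := by simpa using hs
  have hs1' : s + 1 ∈ Icc t1 T := by simpa using hs1
  have hswap : σ * swap s (s + 1) ∈ S := by
    refine ⟨fun t ht => ?_, hle.trans ?_⟩
    · rw [Perm.mul_apply, swap_apply_of_ne_of_ne (by rintro rfl; exact ht hs')
        (by rintro rfl; exact ht hs1'), hfix t ht]
    · exact armV_le_armV_comp_swap H hηm hη hr
        (fun t ht => hp _ (Perm.apply_mem_of_eqOn_compl hfix ht)) (mem_Icc.1 hs').1
        (mem_Icc.1 hs1').2 hasc.le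
  have hpot := hmin _ hswap
  rw [Perm.coe_mul, ← Function.comp_assoc, sum_natCast_mul_comp_swap hs' hs1'] at hpot
  simp only [Function.comp_apply] at hpot hasc
  linarith

end ARM

theorem gain_seeking_markdown_optimal_general
    (pbar : ℝ) (H : ℝ → ℝ) (ηp ηm : ℝ)
    (hηm : 0 ≤ ηm) (hη : ηm ≤ ηp)
    (t1 T : ℕ)
    (r : ℝ) (hr : r ∈ Set.Icc 0 pbar) :
    (∀ p : ℕ → ℝ, (∀ t ∈ Finset.Icc t1 T, p t ∈ Set.Icc 0 pbar) →
      ∃ σ : Equiv.Perm ℕ,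
        (∀ t, t ∉ Finset.Icc t1 T → σ t = t) ∧
        AntitoneOn (fun t => p (σ t)) ↑(Finset.Icc t1 T) ∧
        armV H ηp ηm t1 T r p ≤ armV H ηp ηm t1 T r (fun t => p (σ t))) ∧
    armVStar H ηp ηm t1 T pbar r =
      sSup {x : ℝ | ∃ q : ℕ → ℝ,
        (∀ t ∈ Finset.Icc t1 T, q t ∈ Set.Icc 0 pbar) ∧
        AntitoneOn q ↑(Finset.Icc t1 T) ∧
        x = armV H ηp ηm t1 T r q} := by
  have rearrange (p : ℕ → ℝ) (hp : ∀ t ∈ Icc t1 T, p t ∈ Set.Icc 0 pbar) :=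
    ARM.exists_perm_antitoneOn_armV_le H hηm hη hr.1 fun t ht => (hp t ht).1
  refine ⟨rearrange, csSup_eq_csSup_of_forall_exists_le ?_ ?_⟩
  · rintro _ ⟨p, hp, rfl⟩
    obtain ⟨σ, hfix, hanti, hle⟩ := rearrange p hp
    exact ⟨_, ⟨p ∘ σ, fun t ht => hp _ (Perm.apply_mem_of_eqOn_compl hfix ht), hanti, rfl⟩, hle⟩
  · rintro _ ⟨q, hq, -, rfl⟩
    exact ⟨_, ⟨q, hq, rfl⟩, le_rfl⟩

/-- For gain-seeking customers (`η⁺ ≥ η⁻ ≥ 0`), the non-increasing rearrangement of any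
price sequence yields weakly more revenue, and the optimal value equals the supremum over
non-increasing (markdown) price sequences. -/
theorem gain_seeking_markdown_optimal
    (pbar : ℝ) (hpbar : 0 < pbar) (H : ℝ → ℝ) (ηp ηm : ℝ)
    (hηm : 0 ≤ ηm) (hη : ηm ≤ ηp)
    (t1 T : ℕ) (ht1 : 1 ≤ t1) (hT : t1 ≤ T)
    (r : ℝ) (hr : r ∈ Set.Icc 0 pbar) :
    (∀ p : ℕ → ℝ, (∀ t ∈ Finset.Icc t1 T, p t ∈ Set.Icc 0 pbar) →
      ∃ σ : Equiv.Perm ℕ,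
        (∀ t, t ∉ Finset.Icc t1 T → σ t = t) ∧
        AntitoneOn (fun t => p (σ t)) ↑(Finset.Icc t1 T) ∧
        armV H ηp ηm t1 T r p ≤ armV H ηp ηm t1 T r (fun t => p (σ t))) ∧
    armVStar H ηp ηm t1 T pbar r =
      sSup {x : ℝ | ∃ q : ℕ → ℝ,
        (∀ t ∈ Finset.Icc t1 T, q t ∈ Set.Icc 0 pbar) ∧
        AntitoneOn q ↑(Finset.Icc t1 T) ∧
        x = armV H ηp ηm t1 T r q} :=
  gain_seeking_markdown_optimal_general pbar H ηp ηm hηm hη t1 T r hr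
end

section
/- Let η⁺ ≥ η⁻ ≥ 0 and define g(p,r) = p·(η⁺·max(r−p,0) − η⁻·max(p−r,0)). Then for every integer t ≥ 1 and all reals r ≥ 0 and 0 ≤ p ≤ q, one has g(q, r) + g(p, (t·r + q)/(t+1)) ≥ g(p, r) + g(q, (t·r + p)/(t+1)). (This is the key adjacent-swap inequality: under the averaging reference mechanism, exchanging two consecutive out-of-order prices, which replaces the intermediate reference price (t·r+p)/(t+1) by (t·r+q)/(t+1), weakly increases the two affected single-round reference-effect revenue terms, since the base-demand terms p·H(p) + q·H(q) are unchanged.) -/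
/-!
Writing `g(p, r) = (η⁺ - η⁻)·max(p(r - p), 0) + η⁻·p(r - p)` splits the inequality into a
linear part and a kink part. With `s = 1/(t+1)` the averaged reference is `r + s(x - r)`, and
the linear parts of the two sides differ by exactly `s·r·(q - p) ≥ 0`. For the kink part,
`max(A, 0) + max(B, 0) = max(A + B, A, B, 0)`, so besides the linear comparison it remains to
bound each left-hand term separately by the right-hand side, a case distinction on the position
of `r` relative to `p` and `q`.
-/

noncomputable def gRef (ηp ηm : ℝ) (p r : ℝ) : ℝ :=
  p * (ηp * max (r - p) 0 - ηm * max (p - r) 0)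

lemma gRef_eq_of_nonneg (ηp ηm : ℝ) {p : ℝ} (hp : 0 ≤ p) (r : ℝ) :
    gRef ηp ηm p r = (ηp - ηm) * max (p * (r - p)) 0 + ηm * (p * (r - p)) := by
  rw [gRef, ← mul_zero p, ← mul_max_of_nonneg _ _ hp, mul_zero]
  rcases le_total r p with h | h
  · rw [max_eq_right (by linarith), max_eq_left (by linarith)]; ring
  · rw [max_eq_left (by linarith), max_eq_right (by linarith)]; ring

lemma max_zero_add_max_zero_le {a b c d : ℝ} (hsum : a + b ≤ c + d)
    (ha : a ≤ max c 0 + max d 0) (hb : b ≤ max c 0 + max d 0) :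
    max a 0 + max b 0 ≤ max c 0 + max d 0 := by
  rcases max_cases a 0 with ⟨ea, -⟩ | ⟨ea, -⟩ <;>
    rcases max_cases b 0 with ⟨eb, -⟩ | ⟨eb, -⟩ <;> rw [ea, eb] <;>
    linarith [le_max_left c 0, le_max_left d 0, le_max_right c 0, le_max_right d 0]

lemma swap_linear_le {s r p q : ℝ} (hs0 : 0 ≤ s) (hr : 0 ≤ r) (hpq : p ≤ q) :
    p * (r - p) + q * (r + s * (p - r) - q) ≤ q * (r - q) + p * (r + s * (q - r) - p) := by
  linarith [mul_nonneg (mul_nonneg hs0 hr) (sub_nonneg.2 hpq)]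

section Swap

variable {s r p q : ℝ} (hs0 : 0 ≤ s) (hr : 0 ≤ r) (hp : 0 ≤ p) (hpq : p ≤ q)
include hs0 hr hp hpq

lemma swap_kink_le (hs1 : s ≤ 1) :
    max (p * (r - p)) 0 + max (q * (r + s * (p - r) - q)) 0 ≤
      max (q * (r - q)) 0 + max (p * (r + s * (q - r) - p)) 0 := by
  have hq : 0 ≤ q := hp.trans hpq
  refine max_zero_add_max_zero_le (swap_linear_le hs0 hr hpq) ?_ ?_
  · rcases le_total q r with hqr | hrq
    · have hC : 0 ≤ q * (r - q) := mul_nonneg hq (by linarith)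
      have hD : 0 ≤ p * (r + s * (q - r) - p) := mul_nonneg hp (by nlinarith)
      rw [max_eq_left hC, max_eq_left hD]
      nlinarith [mul_nonneg (sub_nonneg.2 hqr) (sub_nonneg.2 (mul_le_of_le_one_right hp hs1))]
    · have hAD : p * (r - p) ≤ p * (r + s * (q - r) - p) :=
        mul_le_mul_of_nonneg_left (by nlinarith) hp
      linarith [le_max_left (p * (r + s * (q - r) - p)) 0, le_max_right (q * (r - q)) 0]
  · rcases le_total p r with hpr | hrp
    · have hBC : q * (r + s * (p - r) - q) ≤ q * (r - q) :=
        mul_le_mul_of_nonneg_left (by nlinarith) hq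
      linarith [le_max_left (q * (r - q)) 0, le_max_right (p * (r + s * (q - r) - p)) 0]
    · have hB : q * (r + s * (p - r) - q) ≤ 0 :=
        mul_nonpos_of_nonneg_of_nonpos hq (by nlinarith)
      linarith [le_max_right (q * (r - q)) 0, le_max_right (p * (r + s * (q - r) - p)) 0]

lemma gRef_swap_le {ηp ηm : ℝ} (hηm : 0 ≤ ηm) (hη : ηm ≤ ηp) (hs1 : s ≤ 1) :
    gRef ηp ηm p r + gRef ηp ηm q (r + s * (p - r)) ≤
      gRef ηp ηm q r + gRef ηp ηm p (r + s * (q - r)) := by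
  have hq : 0 ≤ q := hp.trans hpq
  simp only [gRef_eq_of_nonneg _ _ hp, gRef_eq_of_nonneg _ _ hq]
  linarith [mul_le_mul_of_nonneg_left (swap_kink_le hs0 hr hp hpq hs1) (sub_nonneg.2 hη),
    mul_le_mul_of_nonneg_left (swap_linear_le hs0 hr hpq) hηm]

end Swap

theorem adjacent_swap_inequality_general
    (ηp ηm : ℝ) (hηm : 0 ≤ ηm) (hη : ηm ≤ ηp)
    (t : ℕ) (r p q : ℝ) (hr : 0 ≤ r) (hp : 0 ≤ p) (hpq : p ≤ q) :
    gRef ηp ηm p r + gRef ηp ηm q (((t : ℝ) * r + p) / ((t : ℝ) + 1)) ≤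
      gRef ηp ηm q r + gRef ηp ηm p (((t : ℝ) * r + q) / ((t : ℝ) + 1)) := by
  have ht : (0 : ℝ) < t + 1 := by positivity
  have hs1 : ((t : ℝ) + 1)⁻¹ ≤ 1 := inv_le_one_of_one_le₀ (by linarith [t.cast_nonneg (α := ℝ)])
  have href (x : ℝ) : ((t : ℝ) * r + x) / (t + 1) = r + ((t : ℝ) + 1)⁻¹ * (x - r) := by
    field_simp; ring
  rw [href, href]
  exact gRef_swap_le (inv_nonneg.2 ht.le) hr hp hpq hηm hη hs1

/-- Adjacent-swap inequality for gain-seeking customers (`η⁺ ≥ η⁻ ≥ 0`): under the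
averaging reference mechanism, charging the higher price `q` before the lower price `p`
(which replaces the intermediate reference price `(t·r+p)/(t+1)` by `(t·r+q)/(t+1)`)
weakly increases the sum of the two affected reference-effect revenue terms. -/
theorem adjacent_swap_inequality
    (ηp ηm : ℝ) (hηm : 0 ≤ ηm) (hη : ηm ≤ ηp)
    (t : ℕ) (ht : 1 ≤ t) (r p q : ℝ) (hr : 0 ≤ r) (hp : 0 ≤ p) (hpq : p ≤ q) :
    gRef ηp ηm p r + gRef ηp ηm q (((t : ℝ) * r + p) / ((t : ℝ) + 1)) ≤
      gRef ηp ηm q r + gRef ηp ηm p (((t : ℝ) * r + q) / ((t : ℝ) + 1)) :=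
  adjacent_swap_inequality_general ηp ηm hηm hη t r p q hr hp hpq
end

section
/- Fix integers 1 ≤ t1 ≤ T and loss-averse reference effects η⁻ > η⁺ ≥ 0, and suppose the starting reference price is the price cap: r_{t1} = p̄. Then for every price sequence p = (p_t)_{t=t1}^{T} with values in [0,p̄] there exists a non-increasing rearrangement q of p with V^q(p̄,t1) ≥ V^p(p̄,t1). In particular, the optimal value V*(p̄,t1) equals the supremum of V^q(p̄,t1) over non-increasing sequences q in [0,p̄]^{T−t1+1}. -/
/-!
Swapping an adjacent ascent `p t < p (t + 1)` changes only the reference price of round `t + 1`: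
the averages before and after that round see the same prices. Since the reference starts at the
cap, `p (t + 1) ≤ p̄ ≤ t1 · p̄ ≤ t · r_t`, and under this bound a case analysis of the
piecewise-linear reference effect shows that for loss-averse customers (`η⁺ ≤ η⁻`) the swap
cannot lose revenue. Bubble sort, terminating because each swap removes an ascent pair, reaches
a non-increasing rearrangement; as every markdown sequence is also admissible, the two suprema
coincide.
-/

open Finset Equiv

theorem Equiv.Perm.mapsTo_of_forall_notMem {ι : Type*} {σ : Perm ι} {s : Set ι}
    (h : ∀ x ∉ s, σ x = x) : Set.MapsTo σ s s :=
  fun _ hx => by_contra fun hσx => hσx ((σ.injective (h _ hσx)).symm ▸ hx)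

theorem swap_add_one_apply_lt_of_lt {t s u : ℕ} (hsu : s < u) (h : ¬(s = t ∧ u = t + 1)) :
    swap t (t + 1) s < swap t (t + 1) u := by
  rw [swap_apply_def, swap_apply_def]
  split_ifs <;> omega

theorem mapsTo_swap_add_one_Icc {t1 T t : ℕ} (ht : t1 ≤ t) (htT : t < T) :
    Set.MapsTo (swap t (t + 1)) ↑(Icc t1 T) ↑(Icc t1 T) := by
  intro u hu
  simp only [coe_Icc, Set.mem_Icc, swap_apply_def] at hu ⊢
  split_ifs <;> omega

section BubbleSort

variable {α β : Type*} [LinearOrder α] [Preorder β]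

def ascentPairs (t1 T : ℕ) (p : ℕ → α) : Finset (ℕ × ℕ) :=
  {st ∈ Icc t1 T ×ˢ Icc t1 T | st.1 < st.2 ∧ p st.1 < p st.2}

theorem card_ascentPairs_comp_swap_lt {t1 T t : ℕ} {p : ℕ → α} (ht : t1 ≤ t) (htT : t < T)
    (hlt : p t < p (t + 1)) :
    #(ascentPairs t1 T (p ∘ swap t (t + 1))) < #(ascentPairs t1 T p) := by
  set σ := swap t (t + 1)
  have hmem : (t, t + 1) ∈ ascentPairs t1 T p := by
    simp only [ascentPairs, mem_filter, mem_product, mem_Icc]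
    exact ⟨⟨⟨ht, by omega⟩, by omega, by omega⟩, by omega, hlt⟩
  refine lt_of_le_of_lt ?_ (card_erase_lt_of_mem hmem)
  refine card_le_card_of_injOn (fun st => (σ st.1, σ st.2)) ?_ ?_
  · rintro ⟨s, u⟩ hsu
    simp only [ascentPairs, coe_filter, mem_product, Set.mem_ofPred_eq, Function.comp_apply] at hsu
    obtain ⟨⟨hs, hu⟩, hsu, hp⟩ := hsu
    have hne : ¬(s = t ∧ u = t + 1) := by
      rintro ⟨rfl, rfl⟩
      simp only [σ, swap_apply_left, swap_apply_right] at hp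
      exact hp.not_gt hlt
    simp only [ascentPairs, coe_erase, coe_filter, mem_product, Set.mem_sdiff, Set.mem_ofPred_eq,
      Set.mem_singleton_iff, Prod.mk.injEq]
    refine ⟨⟨⟨mapsTo_swap_add_one_Icc ht htT hs, mapsTo_swap_add_one_Icc ht htT hu⟩,
      swap_add_one_apply_lt_of_lt hsu hne, hp⟩, fun h => hne ?_⟩
    simp only [σ, swap_apply_eq_iff, swap_apply_left, swap_apply_right] at h
    omega
  · rintro ⟨s, u⟩ - ⟨s', u'⟩ - h
    simp only [Prod.mk.injEq, σ.injective.eq_iff] at h ⊢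
    exact h

theorem exists_perm_antitoneOn_le_of_swap {s : Set α} {V : (ℕ → α) → β} {t1 T : ℕ}
    (hV : ∀ p t, Set.MapsTo p ↑(Icc t1 T) s → t1 ≤ t → t < T → p t < p (t + 1) →
      V p ≤ V (p ∘ swap t (t + 1)))
    (p : ℕ → α) (hp : Set.MapsTo p ↑(Icc t1 T) s) :
    ∃ σ : Perm ℕ, (∀ t ∉ Icc t1 T, σ t = t) ∧ AntitoneOn (p ∘ σ) ↑(Icc t1 T) ∧
      V p ≤ V (p ∘ σ) := by
  induction hn : #(ascentPairs t1 T p) using Nat.strong_induction_on generalizing p with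
  | _ n ih =>
  by_cases hasc : ∃ t, t1 ≤ t ∧ t < T ∧ p t < p (t + 1)
  · obtain ⟨t, ht, htT, hlt⟩ := hasc
    obtain ⟨σ, hσ, hanti, hle⟩ := ih _ (hn ▸ card_ascentPairs_comp_swap_lt ht htT hlt)
      (p ∘ swap t (t + 1)) (hp.comp (mapsTo_swap_add_one_Icc ht htT)) rfl
    refine ⟨swap t (t + 1) * σ, fun u hu => ?_, hanti, (hV p t hp ht htT hlt).trans hle⟩
    rw [Perm.mul_apply, hσ u hu, swap_apply_of_ne_of_ne] <;> rintro rfl <;>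
      simp only [mem_Icc] at hu <;> omega
  · push Not at hasc
    refine ⟨1, fun _ _ => rfl, antitoneOn_of_add_one_le (by simp [Set.ordConnected_Icc]) ?_, le_rfl⟩
    intro t _ ht ht'
    simp only [coe_Icc, Set.mem_Icc] at ht ht'
    exact hasc t ht.1 ht'.2

end BubbleSort

/- `r` is the reference price of round `τ`, and `(τ * r + x) / (τ + 1)` the reference price of
round `τ + 1` after charging `x` in round `τ`. -/
theorem armRev_add_armRev_le_swap (H : ℝ → ℝ) {ηp ηm τ r a b : ℝ} (hηp : 0 ≤ ηp)
    (hη : ηp ≤ ηm) (hτ : 0 < τ) (ha : 0 ≤ a) (hab : a ≤ b) (hbτ : b ≤ τ * r) :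
    armRev H ηp ηm a r + armRev H ηp ηm b ((τ * r + a) / (τ + 1)) ≤
      armRev H ηp ηm b r + armRev H ηp ηm a ((τ * r + b) / (τ + 1)) := by
  have hτ1 : 0 < τ + 1 := by linarith
  have hr : 0 ≤ r := by nlinarith
  have hηm : 0 ≤ ηm := hηp.trans hη
  unfold armRev
  rcases le_total r a with hra | har
  · have hrb : r ≤ b := hra.trans hab
    have hb : (τ * r + a) / (τ + 1) ≤ b := by rw [div_le_iff₀ hτ1]; nlinarith
    rcases le_total ((τ * r + b) / (τ + 1)) a with ha' | ha'
    · simp only [max_eq_left, max_eq_right, sub_nonneg, sub_nonpos, hra, hrb, hb, ha']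
      field_simp
      nlinarith [mul_nonneg hηm (mul_nonneg hr (sub_nonneg.2 hab))]
    · have hba : b ≤ τ * a := hbτ.trans (by nlinarith)
      simp only [max_eq_left, max_eq_right, sub_nonneg, sub_nonpos, hra, hrb, hb, ha']
      field_simp
      nlinarith [mul_nonneg hηm (mul_nonneg (sub_nonneg.2 hra)
          (by nlinarith : 0 ≤ (τ + 1) * a - b)),
        mul_nonneg hηp (mul_nonneg ha
          (by linarith [(le_div_iff₀ hτ1).1 ha'] : 0 ≤ τ * r + b - (τ + 1) * a))]
  rcases le_total r b with hrb | hbr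
  · have hb : (τ * r + a) / (τ + 1) ≤ b := by rw [div_le_iff₀ hτ1]; nlinarith
    have ha' : a ≤ (τ * r + b) / (τ + 1) := by rw [le_div_iff₀ hτ1]; nlinarith
    simp only [max_eq_left, max_eq_right, sub_nonneg, sub_nonpos, har, hrb, hb, ha']
    field_simp
    nlinarith [mul_nonneg hηp (mul_nonneg ha (sub_nonneg.2 hrb)),
      mul_nonneg hηm (mul_nonneg (ha.trans hab) (sub_nonneg.2 har))]
  · have ha' : a ≤ (τ * r + b) / (τ + 1) := by rw [le_div_iff₀ hτ1]; nlinarith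
    rcases le_total ((τ * r + a) / (τ + 1)) b with hb | hb
    · simp only [max_eq_left, max_eq_right, sub_nonneg, sub_nonpos, har, hbr, hb, ha']
      field_simp
      nlinarith [mul_nonneg (sub_nonneg.2 hη) (mul_nonneg (ha.trans hab)
          (by linarith [(div_le_iff₀ hτ1).1 hb] : 0 ≤ b * (τ + 1) - (τ * r + a))),
        mul_nonneg hηp (mul_nonneg hr (sub_nonneg.2 hab))]
    · simp only [max_eq_left, max_eq_right, sub_nonneg, sub_nonpos, har, hbr, hb, ha']
      field_simp
      nlinarith [mul_nonneg hηp (mul_nonneg hr (sub_nonneg.2 hab))]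

theorem armRef_succ {t1 t : ℕ} (r : ℝ) (p : ℕ → ℝ) (ht : t1 ≤ t) (ht0 : t ≠ 0) :
    armRef t1 r p (t + 1) = (t * armRef t1 r p t + p t) / (t + 1) := by
  have : (t : ℝ) ≠ 0 := Nat.cast_ne_zero.2 ht0
  simp only [armRef, sum_Ico_succ_top ht, Nat.cast_add, Nat.cast_one]
  field_simp
  ring

theorem natCast_mul_le_natCast_mul_armRef {t1 t : ℕ} {r : ℝ} {p : ℕ → ℝ} (ht0 : t ≠ 0)
    (hp : ∀ s ∈ Ico t1 t, 0 ≤ p s) : t1 * r ≤ t * armRef t1 r p t := by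
  have : (t : ℝ) ≠ 0 := Nat.cast_ne_zero.2 ht0
  rw [armRef, mul_div_cancel₀ _ this]
  exact le_add_of_nonneg_right (sum_nonneg hp)

theorem armRef_comp_swap {t1 t u : ℕ} (r : ℝ) (p : ℕ → ℝ) (ht : t1 ≤ t) (hu : u ≠ t + 1) :
    armRef t1 r (p ∘ swap t (t + 1)) u = armRef t1 r p u := by
  simp only [armRef, Function.comp_apply]
  congr 2
  rcases le_or_gt u t with hut | htu
  · refine sum_congr rfl fun s hs => ?_
    rw [mem_Ico] at hs
    rw [swap_apply_of_ne_of_ne (by omega) (by omega)]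
  · refine Perm.sum_comp _ _ _ fun s hs => ?_
    rw [Set.mem_ofPred_eq, swap_apply_ne_self_iff] at hs
    rw [coe_Ico, Set.mem_Ico]
    omega

theorem armV_le_armV_comp_swap (H : ℝ → ℝ) {ηp ηm pbar : ℝ} {t1 T t : ℕ} {p : ℕ → ℝ}
    (hηp : 0 ≤ ηp) (hη : ηp ≤ ηm) (ht1 : 1 ≤ t1) (ht : t1 ≤ t) (htT : t < T)
    (hp : Set.MapsTo p ↑(Icc t1 T) (Set.Icc 0 pbar)) (hab : p t ≤ p (t + 1)) :
    armV H ηp ηm t1 T pbar p ≤ armV H ηp ηm t1 T pbar (p ∘ swap t (t + 1)) := by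
  set q := p ∘ swap t (t + 1)
  have ht0 : t ≠ 0 := by omega
  have hmem : ∀ {u}, t1 ≤ u → u ≤ T → u ∈ (Icc t1 T : Set ℕ) := fun h1 h2 => by simp [h1, h2]
  have hpair : {t, t + 1} ⊆ Icc t1 T := by
    intro u hu
    simp only [mem_insert, mem_singleton] at hu
    rcases hu with rfl | rfl <;> simp only [mem_Icc] <;> omega
  have hrest : ∀ u ∈ Icc t1 T \ {t, t + 1},
      armRev H ηp ηm (q u) (armRef t1 pbar q u) = armRev H ηp ηm (p u) (armRef t1 pbar p u) := by
    intro u hu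
    simp only [mem_sdiff, mem_insert, mem_singleton, not_or] at hu
    rw [armRef_comp_swap pbar p ht hu.2.2]
    simp only [q, Function.comp_apply, swap_apply_of_ne_of_ne hu.2.1 hu.2.2]
  have hpt := hp (hmem ht htT.le)
  have hr : armRef t1 pbar q t = armRef t1 pbar p t := armRef_comp_swap pbar p ht (by omega)
  have hcap : p (t + 1) ≤ t * armRef t1 pbar p t := calc
    p (t + 1) ≤ pbar := (hp (hmem (by omega) htT)).2
    _ ≤ t1 * pbar := le_mul_of_one_le_left (hpt.1.trans hpt.2) (by exact_mod_cast ht1)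
    _ ≤ t * armRef t1 pbar p t := natCast_mul_le_natCast_mul_armRef ht0 fun s hs =>
      (hp (hmem (mem_Ico.1 hs).1 (by linarith [(mem_Ico.1 hs).2]))).1
  unfold armV
  rw [← sum_sdiff hpair, ← sum_sdiff hpair (f := fun u => armRev H ηp ηm (q u) _),
    sum_congr rfl hrest, sum_pair (by omega), sum_pair (by omega), armRef_succ _ _ ht ht0,
    armRef_succ _ _ ht ht0, hr]
  simp only [q, Function.comp_apply, swap_apply_left, swap_apply_right]
  gcongr _ + ?_
  exact armRev_add_armRev_le_swap H hηp hη (by positivity) hpt.1 hab hcap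

theorem loss_averse_markdown_optimal_at_cap_general
    (pbar : ℝ) (H : ℝ → ℝ) (ηp ηm : ℝ)
    (hηp : 0 ≤ ηp) (hη : ηp < ηm)
    (t1 T : ℕ) (ht1 : 1 ≤ t1) :
    (∀ p : ℕ → ℝ, (∀ t ∈ Finset.Icc t1 T, p t ∈ Set.Icc 0 pbar) →
      ∃ σ : Equiv.Perm ℕ,
        (∀ t, t ∉ Finset.Icc t1 T → σ t = t) ∧
        AntitoneOn (fun t => p (σ t)) ↑(Finset.Icc t1 T) ∧
        armV H ηp ηm t1 T pbar p ≤ armV H ηp ηm t1 T pbar (fun t => p (σ t))) ∧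
    armVStar H ηp ηm t1 T pbar pbar =
      sSup {x : ℝ | ∃ q : ℕ → ℝ,
        (∀ t ∈ Finset.Icc t1 T, q t ∈ Set.Icc 0 pbar) ∧
        AntitoneOn q ↑(Finset.Icc t1 T) ∧
        x = armV H ηp ηm t1 T pbar q} := by
  have markdown (p : ℕ → ℝ) (hp : Set.MapsTo p ↑(Icc t1 T) (Set.Icc 0 pbar)) :=
    exists_perm_antitoneOn_le_of_swap (fun _ _ hp ht htT hlt =>
      armV_le_armV_comp_swap H hηp hη.le ht1 ht htT hp hlt.le) p hp
  refine ⟨fun p hp => markdown p hp, csSup_eq_csSup_of_forall_exists_le ?_ ?_⟩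
  · rintro _ ⟨p, hp, rfl⟩
    obtain ⟨σ, hσ, hanti, hle⟩ := markdown p hp
    exact ⟨_, ⟨p ∘ σ, fun u hu => hp _ (Perm.mapsTo_of_forall_notMem hσ hu), hanti, rfl⟩, hle⟩
  · rintro _ ⟨q, hq, -, rfl⟩
    exact ⟨_, ⟨q, hq, rfl⟩, le_rfl⟩

/-- For loss-averse customers (`η⁻ > η⁺ ≥ 0`) starting from reference price `p̄`,
every price sequence admits a non-increasing rearrangement with weakly more revenue,
and the optimal value from `p̄` equals the supremum over markdown sequences. -/
theorem loss_averse_markdown_optimal_at_cap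
    (pbar : ℝ) (hpbar : 0 < pbar) (H : ℝ → ℝ) (ηp ηm : ℝ)
    (hηp : 0 ≤ ηp) (hη : ηp < ηm)
    (t1 T : ℕ) (ht1 : 1 ≤ t1) (hT : t1 ≤ T) :
    (∀ p : ℕ → ℝ, (∀ t ∈ Finset.Icc t1 T, p t ∈ Set.Icc 0 pbar) →
      ∃ σ : Equiv.Perm ℕ,
        (∀ t, t ∉ Finset.Icc t1 T → σ t = t) ∧
        AntitoneOn (fun t => p (σ t)) ↑(Finset.Icc t1 T) ∧
        armV H ηp ηm t1 T pbar p ≤ armV H ηp ηm t1 T pbar (fun t => p (σ t))) ∧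
    armVStar H ηp ηm t1 T pbar pbar =
      sSup {x : ℝ | ∃ q : ℕ → ℝ,
        (∀ t ∈ Finset.Icc t1 T, q t ∈ Set.Icc 0 pbar) ∧
        AntitoneOn q ↑(Finset.Icc t1 T) ∧
        x = armV H ηp ηm t1 T pbar q} :=
  loss_averse_markdown_optimal_at_cap_general pbar H ηp ηm hηp hη t1 T ht1
end

section
/- Fix integers 1 ≤ t1 ≤ T and suppose the starting reference price is r_{t1} = p̄. If the price sequence (p_t)_{t=t1}^{T} with values in [0,p̄] is non-increasing, then the induced ARM reference prices satisfy p_t ≤ r_t for every t ∈ {t1,…,T}. Consequently max(p_t − r_t, 0) = 0 for all t, so the total revenue equals Σ_{t=t1}^{T} p_t·(H(p_t) + η⁺·(r_t − p_t)) and does not depend on the loss parameter η⁻. -/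
/-- The reference price is a weighted average of `r` (weight `t1`) and the past prices
(weight `1` each), so it dominates any common lower bound of them. -/
theorem le_armRef {t1 t : ℕ} {r x : ℝ} {p : ℕ → ℝ} (ht : 0 < t) (ht1 : t1 ≤ t) (hr : x ≤ r)
    (hp : ∀ s ∈ Finset.Ico t1 t, x ≤ p s) : x ≤ armRef t1 r p t := by
  rw [armRef, le_div_iff₀ (by exact_mod_cast ht)]
  have hsum : ((t : ℝ) - t1) * x ≤ ∑ s ∈ Finset.Ico t1 t, p s := by
    simpa [Nat.cast_sub ht1] using Finset.card_nsmul_le_sum _ _ x hp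
  nlinarith [mul_le_mul_of_nonneg_left hr (Nat.cast_nonneg (α := ℝ) t1)]

theorem armRev_of_le {H : ℝ → ℝ} {ηp ηm x r : ℝ} (h : x ≤ r) :
    armRev H ηp ηm x r = x * (H x + ηp * (r - x)) := by
  rw [armRev, max_eq_left (sub_nonneg.mpr h), max_eq_right (sub_nonpos.mpr h)]
  ring

theorem markdown_from_cap_no_loss_general
    (pbar : ℝ) (H : ℝ → ℝ) (ηp ηm : ℝ)
    (t1 T : ℕ) (ht1 : 1 ≤ t1)
    (p : ℕ → ℝ) (hp : ∀ t ∈ Finset.Icc t1 T, p t ∈ Set.Icc 0 pbar)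
    (hmono : AntitoneOn p ↑(Finset.Icc t1 T)) :
    (∀ t ∈ Finset.Icc t1 T, p t ≤ armRef t1 pbar p t) ∧
    (∀ t ∈ Finset.Icc t1 T, max (p t - armRef t1 pbar p t) 0 = 0) ∧
    armV H ηp ηm t1 T pbar p =
      ∑ t ∈ Finset.Icc t1 T, p t * (H (p t) + ηp * (armRef t1 pbar p t - p t)) := by
  have key : ∀ t ∈ Finset.Icc t1 T, p t ≤ armRef t1 pbar p t := by
    intro t ht
    obtain ⟨ht1t, htT⟩ := Finset.mem_Icc.mp ht
    refine le_armRef (by omega) ht1t (hp t ht).2 fun s hs => ?_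
    obtain ⟨hs1, hst⟩ := Finset.mem_Ico.mp hs
    exact hmono (Finset.mem_coe.mpr (Finset.mem_Icc.mpr ⟨hs1, by omega⟩)) ht hst.le
  refine ⟨key, fun t ht => max_eq_right (sub_nonpos.mpr (key t ht)), ?_⟩
  exact Finset.sum_congr rfl fun t ht => armRev_of_le (key t ht)

/-- If the starting reference price is the price cap `p̄` and the price sequence is
non-increasing, then prices never exceed the induced reference prices, the loss term
vanishes, and the total revenue does not depend on the loss parameter `η⁻`. -/
theorem markdown_from_cap_no_loss
    (pbar : ℝ) (hpbar : 0 < pbar) (H : ℝ → ℝ) (ηp ηm : ℝ) (hηp : 0 ≤ ηp) (hηm : 0 ≤ ηm)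
    (t1 T : ℕ) (ht1 : 1 ≤ t1) (hT : t1 ≤ T)
    (p : ℕ → ℝ) (hp : ∀ t ∈ Finset.Icc t1 T, p t ∈ Set.Icc 0 pbar)
    (hmono : AntitoneOn p ↑(Finset.Icc t1 T)) :
    (∀ t ∈ Finset.Icc t1 T, p t ≤ armRef t1 pbar p t) ∧
    (∀ t ∈ Finset.Icc t1 T, max (p t - armRef t1 pbar p t) 0 = 0) ∧
    armV H ηp ηm t1 T pbar p =
      ∑ t ∈ Finset.Icc t1 T, p t * (H (p t) + ηp * (armRef t1 pbar p t - p t)) :=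
  markdown_from_cap_no_loss_general pbar H ηp ηm t1 T ht1 p hp hmono
end

section
/- Fix integers 1 ≤ t1 ≤ T, parameters η⁺, η⁻ ≥ 0, any base demand function H, any price sequence p ∈ [0,p̄]^{T−t1+1}, and starting reference prices 0 ≤ r ≤ r′ ≤ p̄. Then 0 ≤ V^p(r′, t1) − V^p(r, t1) ≤ p̄ · t1 · (r′ − r) · (η⁺ + η⁻) · Σ_{t=t1}^{T} (1/t). That is, applying a fixed price sequence with a higher starting reference price yields weakly more revenue, and the revenue gap is at most p̄·t1·(r′−r)·(η⁺+η⁻) times the harmonic sum Σ_{t=t1}^{T} 1/t. -/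
/-
Raising the starting reference price from `r` to `r'` shifts every ARM reference price `r_t` by
exactly `t1 (r' - r) / t`. At price `x ≥ 0` the round revenue is nondecreasing and
`x (η⁺ + η⁻)`-Lipschitz in the reference price, because both positive parts are 1-Lipschitz;
with `x = p_t ≤ p̄`, summing the per-round gaps gives the harmonic bound.
-/

lemma max_zero_sub_max_zero_mem_Icc {α : Type*} [AddCommGroup α] [LinearOrder α]
    [IsOrderedAddMonoid α] {a b : α} (hab : a ≤ b) :
    max b 0 - max a 0 ∈ Set.Icc 0 (b - a) :=
  ⟨sub_nonneg.2 (max_le_max_right 0 hab),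
    (max_sub_max_le_max b 0 a 0).trans_eq (by rw [sub_self, max_eq_left (sub_nonneg.2 hab)])⟩

lemma armRev_sub_armRev (H : ℝ → ℝ) (ηp ηm x r r' : ℝ) :
    armRev H ηp ηm x r' - armRev H ηp ηm x r =
      x * (ηp * (max (r' - x) 0 - max (r - x) 0) + ηm * (max (x - r) 0 - max (x - r') 0)) := by
  unfold armRev
  ring

lemma armRev_sub_armRev_mem_Icc (H : ℝ → ℝ) {ηp ηm x r r' : ℝ} (hηp : 0 ≤ ηp) (hηm : 0 ≤ ηm)
    (hx : 0 ≤ x) (hrr' : r ≤ r') :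
    armRev H ηp ηm x r' - armRev H ηp ηm x r ∈ Set.Icc 0 (x * (ηp + ηm) * (r' - r)) := by
  obtain ⟨hgain0, hgain⟩ := max_zero_sub_max_zero_mem_Icc (sub_le_sub_right hrr' x)
  obtain ⟨hloss0, hloss⟩ := max_zero_sub_max_zero_mem_Icc (sub_le_sub_left hrr' x)
  rw [sub_sub_sub_cancel_right] at hgain
  rw [sub_sub_sub_cancel_left] at hloss
  rw [armRev_sub_armRev]
  constructor
  · positivity
  · calc x * (ηp * (max (r' - x) 0 - max (r - x) 0) + ηm * (max (x - r) 0 - max (x - r') 0))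
        ≤ x * (ηp * (r' - r) + ηm * (r' - r)) := by gcongr
      _ = x * (ηp + ηm) * (r' - r) := by ring

lemma armRef_sub_armRef (t1 : ℕ) (r r' : ℝ) (p : ℕ → ℝ) (t : ℕ) :
    armRef t1 r' p t - armRef t1 r p t = t1 * (r' - r) / t := by
  unfold armRef
  rw [← sub_div]
  ring

lemma armRef_mono {t1 : ℕ} {r r' : ℝ} (p : ℕ → ℝ) (t : ℕ) (hrr' : r ≤ r') :
    armRef t1 r p t ≤ armRef t1 r' p t := by
  rw [← sub_nonneg, armRef_sub_armRef]
  have : 0 ≤ r' - r := sub_nonneg.2 hrr'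
  positivity

theorem revenue_gap_fixed_policy_general
    (pbar : ℝ) (H : ℝ → ℝ) (ηp ηm : ℝ) (hηp : 0 ≤ ηp) (hηm : 0 ≤ ηm)
    (t1 T : ℕ)
    (p : ℕ → ℝ) (hp : ∀ t ∈ Finset.Icc t1 T, p t ∈ Set.Icc 0 pbar)
    (r r' : ℝ) (hrr' : r ≤ r') :
    0 ≤ armV H ηp ηm t1 T r' p - armV H ηp ηm t1 T r p ∧
    armV H ηp ηm t1 T r' p - armV H ηp ηm t1 T r p ≤
      pbar * (t1 : ℝ) * (r' - r) * (ηp + ηm) * ∑ t ∈ Finset.Icc t1 T, (1 : ℝ) / (t : ℝ) := by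
  have hround : ∀ t ∈ Finset.Icc t1 T,
      armRev H ηp ηm (p t) (armRef t1 r' p t) - armRev H ηp ηm (p t) (armRef t1 r p t) ∈
        Set.Icc 0 (pbar * t1 * (r' - r) * (ηp + ηm) * (1 / t)) := by
    intro t ht
    obtain ⟨hpt0, hpt⟩ := hp t ht
    obtain ⟨hgap0, hgap⟩ :=
      armRev_sub_armRev_mem_Icc H hηp hηm hpt0 (armRef_mono (t1 := t1) p t hrr')
    have hshift : 0 ≤ (t1 : ℝ) * (r' - r) / t := by
      rw [← armRef_sub_armRef]
      exact sub_nonneg.2 (armRef_mono p t hrr')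
    refine ⟨hgap0, hgap.trans ?_⟩
    calc p t * (ηp + ηm) * (armRef t1 r' p t - armRef t1 r p t)
        = p t * (ηp + ηm) * (t1 * (r' - r) / t) := by rw [armRef_sub_armRef]
      _ ≤ pbar * (ηp + ηm) * (t1 * (r' - r) / t) := by gcongr
      _ = pbar * t1 * (r' - r) * (ηp + ηm) * (1 / t) := by ring
  unfold armV
  rw [← Finset.sum_sub_distrib, Finset.mul_sum]
  exact ⟨Finset.sum_nonneg fun t ht => (hround t ht).1,
    Finset.sum_le_sum fun t ht => (hround t ht).2⟩

/-- Applying a fixed price sequence with a higher starting reference price yields weakly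
more revenue, and the revenue gap is at most
`p̄·t1·(r′−r)·(η⁺+η⁻)·Σ_{t=t1}^{T} 1/t`. -/
theorem revenue_gap_fixed_policy
    (pbar : ℝ) (hpbar : 0 < pbar) (H : ℝ → ℝ) (ηp ηm : ℝ) (hηp : 0 ≤ ηp) (hηm : 0 ≤ ηm)
    (t1 T : ℕ) (ht1 : 1 ≤ t1) (hT : t1 ≤ T)
    (p : ℕ → ℝ) (hp : ∀ t ∈ Finset.Icc t1 T, p t ∈ Set.Icc 0 pbar)
    (r r' : ℝ) (hr0 : 0 ≤ r) (hrr' : r ≤ r') (hr' : r' ≤ pbar) :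
    0 ≤ armV H ηp ηm t1 T r' p - armV H ηp ηm t1 T r p ∧
    armV H ηp ηm t1 T r' p - armV H ηp ηm t1 T r p ≤
      pbar * (t1 : ℝ) * (r' - r) * (ηp + ηm) * ∑ t ∈ Finset.Icc t1 T, (1 : ℝ) / (t : ℝ) :=
  revenue_gap_fixed_policy_general pbar H ηp ηm hηp hηm t1 T p hp r r' hrr'
end

section
/- Fix integers 1 ≤ t1 ≤ T, parameters η⁺, η⁻ ≥ 0, a continuous base demand H on [0,p̄], and any starting reference price r ∈ [0,p̄]. Then there exists a non-increasing (markdown) price sequence q ∈ [0,p̄]^{T−t1+1} such that V*(r, t1) − V^q(r, t1) ≤ p̄ · t1 · (p̄ − r) · (η⁺ + η⁻) · Σ_{t=t1}^{T} (1/t). In particular, for t1 = 1, markdown pricing is near-optimal with revenue loss at most p̄·(p̄ − r)·(η⁺ + η⁻)·Σ_{t=1}^{T} 1/t = O(p̄·(p̄−r)·(η⁺+η⁻)·ln T). -/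
/-!
Take an optimal price sequence (it exists by compactness of `[0, p̄]^T`, `H` being continuous)
and sort it into non-increasing order by selection sort: bring the largest remaining price `m`
to the front by adjacent swaps. Swapping `a ≤ m` so that `m` is charged first never lowers the
gain terms `η⁺ x (r - x)⁺`, and changes the loss terms by an amount that telescopes along the
swaps, so moving `m` to round `t` costs at most `η⁻ m (m - r_t)⁺`. Charging `m` first keeps
`t (m - r_t)` unchanged in the next round, hence the cost at round `t` is at most
`η⁻ p̄ t₁ (p̄ - r) / t`, and summing over the rounds gives the harmonic bound.
-/

open Finset

noncomputable def armStep (t : ℕ) (r x : ℝ) : ℝ := ((t : ℝ) * r + x) / (t + 1)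

lemma succ_mul_armStep (t : ℕ) (r x : ℝ) : ((t : ℝ) + 1) * armStep t r x = t * r + x :=
  mul_div_cancel₀ _ (by positivity)

lemma armStep_armStep_comm (t : ℕ) (r a b : ℝ) :
    armStep (t + 1) (armStep t r a) b = armStep (t + 1) (armStep t r b) a := by
  unfold armStep
  push_cast
  rw [mul_div_cancel₀ _ (by positivity), mul_div_cancel₀ _ (by positivity)]
  ring

lemma succ_mul_max_sub_armStep (t : ℕ) (r m : ℝ) :
    ((t : ℝ) + 1) * max (m - armStep t r m) 0 = t * max (m - r) 0 := by
  rw [mul_max_of_nonneg _ _ (by positivity), mul_max_of_nonneg _ _ (by positivity),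
    mul_sub, succ_mul_armStep]
  ring_nf

lemma mul_max_sub_le_mul_max_sub {m c : ℝ} (hm : 0 ≤ m) (hmc : m ≤ c) (r : ℝ) :
    m * max (m - r) 0 ≤ c * max (c - r) 0 :=
  mul_le_mul hmc (max_le_max (by linarith) le_rfl) (le_max_right _ _) (hm.trans hmc)

noncomputable def armVList (H : ℝ → ℝ) (ηp ηm : ℝ) : ℕ → ℝ → List ℝ → ℝ
  | _, _, [] => 0
  | t, r, x :: xs => armRev H ηp ηm x r + armVList H ηp ηm (t + 1) (armStep t r x) xs

section Swap

variable {t : ℕ} {r a m : ℝ}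

lemma max_sub_armStep_le (ham : a ≤ m) : max (a - armStep t r m) 0 ≤ max (a - r) 0 := by
  have hv := succ_mul_armStep t r m
  have ht : (0 : ℝ) ≤ t := t.cast_nonneg
  rcases le_total r m with h | h
  · exact max_le_max (by nlinarith) le_rfl
  · exact (max_eq_right (by nlinarith)).trans_le (le_max_right _ _)

lemma gain_armStep_swap_le (ha : 0 ≤ a) (ham : a ≤ m) :
    a * max (r - a) 0 + m * max (armStep t r a - m) 0 ≤
      a * max (armStep t r m - a) 0 + m * max (r - m) 0 := by
  have hu := succ_mul_armStep t r a
  have hv := succ_mul_armStep t r m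
  have ht : (0 : ℝ) ≤ t := t.cast_nonneg
  rcases le_total r m with h | h
  · rw [max_eq_right (a := armStep t r a - m) (by nlinarith)]
    have : max (r - a) 0 ≤ max (armStep t r m - a) 0 := max_le_max (by nlinarith) le_rfl
    nlinarith [mul_nonneg (ha.trans ham) (le_max_right (r - m) 0)]
  · have hw : ((t : ℝ) + 1) * max (armStep t r a - m) 0 ≤ t * (r - m) := by
      rw [mul_max_of_nonneg _ _ (by positivity)]
      exact max_le (by nlinarith) (by nlinarith)
    have hmv : m ≤ armStep t r m := by nlinarith
    rw [max_eq_left (a := r - a) (by linarith), max_eq_left (a := r - m) (by linarith),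
      max_eq_left (a := armStep t r m - a) (by linarith)]
    refine le_of_mul_le_mul_left ?_ (by positivity : (0 : ℝ) < t + 1)
    nlinarith [mul_le_mul_of_nonneg_left hw (ha.trans ham),
      mul_nonneg (sub_nonneg.2 ham) (sub_nonneg.2 h)]

variable (H : ℝ → ℝ) {ηp ηm : ℝ}

/-- The base-demand terms cancel; the potential `η⁻ m (m - ·)⁺` makes the swaps telescope. -/
lemma armRev_swap_le (hp : 0 ≤ ηp) (hm : 0 ≤ ηm) (ha : 0 ≤ a) (ham : a ≤ m) :
    armRev H ηp ηm a r + armRev H ηp ηm m (armStep t r a) + ηm * m * max (m - armStep t r a) 0 ≤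
      armRev H ηp ηm m r + armRev H ηp ηm a (armStep t r m) + ηm * m * max (m - r) 0 := by
  have loss := mul_le_mul_of_nonneg_left
    (mul_le_mul_of_nonneg_left (max_sub_armStep_le (t := t) (r := r) ham) hm) ha
  have gain := mul_le_mul_of_nonneg_left (gain_armStep_swap_le (t := t) (r := r) ha ham) hp
  simp only [armRev]
  linarith

lemma armVList_swap_le (hp : 0 ≤ ηp) (hm : 0 ≤ ηm) (ha : 0 ≤ a) (ham : a ≤ m) (L : List ℝ) :
    armVList H ηp ηm t r (a :: m :: L) + ηm * m * max (m - armStep t r a) 0 ≤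
      armVList H ηp ηm t r (m :: a :: L) + ηm * m * max (m - r) 0 := by
  simp only [armVList]
  rw [armStep_armStep_comm]
  linarith [armRev_swap_le H hp hm (t := t) (r := r) ha ham]

end Swap

section Rearrangement

variable (H : ℝ → ℝ) {ηp ηm : ℝ}

lemma armVList_append_cons_le_cons_append (hp : 0 ≤ ηp) (hm : 0 ≤ ηm) {m : ℝ} (hm0 : 0 ≤ m)
    (A B : List ℝ) (hA : ∀ x ∈ A, 0 ≤ x ∧ x ≤ m) (t : ℕ) (r : ℝ) :
    armVList H ηp ηm t r (A ++ m :: B) ≤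
      armVList H ηp ηm t r (m :: (A ++ B)) + ηm * m * max (m - r) 0 := by
  induction A generalizing t r with
  | nil =>
    have : 0 ≤ ηm * m * max (m - r) 0 := by positivity
    simpa using this
  | cons a A ih =>
    obtain ⟨ha, ham⟩ := hA a List.mem_cons_self
    have ih' := ih (fun x hx => hA x (List.mem_cons_of_mem a hx)) (t + 1) (armStep t r a)
    calc armVList H ηp ηm t r (a :: A ++ m :: B)
        = armRev H ηp ηm a r + armVList H ηp ηm (t + 1) (armStep t r a) (A ++ m :: B) := rfl
      _ ≤ armVList H ηp ηm t r (a :: m :: (A ++ B)) + ηm * m * max (m - armStep t r a) 0 := by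
        simp only [armVList] at ih' ⊢
        linarith
      _ ≤ armVList H ηp ηm t r (m :: (a :: A ++ B)) + ηm * m * max (m - r) 0 :=
        armVList_swap_le H hp hm ha ham _

lemma armVList_append_cons_le_of_le (hp : 0 ≤ ηp) (hm : 0 ≤ ηm) {t : ℕ} (ht : 0 < t)
    {r m S : ℝ} (hm0 : 0 ≤ m) {A B Q : List ℝ} (hA : ∀ x ∈ A, 0 ≤ x ∧ x ≤ m)
    (hQ : armVList H ηp ηm (t + 1) (armStep t r m) (A ++ B) ≤ armVList H ηp ηm (t + 1)
      (armStep t r m) Q + ηm * m * max (m - armStep t r m) 0 * (t + 1) * S) :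
    armVList H ηp ηm t r (A ++ m :: B) ≤
      armVList H ηp ηm t r (m :: Q) + ηm * m * max (m - r) 0 * t * (1 / t + S) := by
  have ht' : (t : ℝ) ≠ 0 := by positivity
  calc armVList H ηp ηm t r (A ++ m :: B)
      ≤ armVList H ηp ηm t r (m :: (A ++ B)) + ηm * m * max (m - r) 0 :=
        armVList_append_cons_le_cons_append H hp hm hm0 A B hA t r
    _ ≤ armVList H ηp ηm t r (m :: Q) +
          ηm * m * (((t : ℝ) + 1) * max (m - armStep t r m) 0) * S + ηm * m * max (m - r) 0 := by
        simp only [armVList]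
        linarith
    _ = _ := by
        rw [succ_mul_max_sub_armStep]
        field_simp
        ring

lemma exists_sortedGE_perm_armVList_le (hp : 0 ≤ ηp) (hm : 0 ≤ ηm) (L : List ℝ) (t : ℕ)
    (ht : 0 < t) (r c : ℝ) (hL : ∀ x ∈ L, 0 ≤ x ∧ x ≤ c) :
    ∃ Q : List ℝ, Q.Perm L ∧ Q.SortedGE ∧
      armVList H ηp ηm t r L ≤ armVList H ηp ηm t r Q +
        ηm * c * max (c - r) 0 * t * ∑ k ∈ Ico t (t + L.length), (1 : ℝ) / k := by
  induction hn : L.length generalizing L t r c with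
  | zero =>
    obtain rfl := List.length_eq_zero_iff.1 hn
    exact ⟨[], List.Perm.refl _, List.Pairwise.nil.sortedGE, by simp⟩
  | succ n ih =>
    have hpos : 0 < L.length := by omega
    obtain ⟨m, hmem, hmax⟩ : ∃ m ∈ L, ∀ x ∈ L, x ≤ m := ⟨_, List.maximum_of_length_pos_mem hpos,
      fun x hx => List.le_maximum_of_length_pos_of_mem hx hpos⟩
    obtain ⟨A, B, rfl⟩ := List.append_of_mem hmem
    have hsub : ∀ x ∈ A ++ B, x ∈ A ++ m :: B := fun x hx => by
      rcases List.mem_append.1 hx with h | h <;> simp [h]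
    have hAB : ∀ x ∈ A ++ B, 0 ≤ x ∧ x ≤ m := fun x hx =>
      ⟨(hL x (hsub x hx)).1, hmax x (hsub x hx)⟩
    obtain ⟨Q, hperm, hsorted, hle⟩ :=
      ih (A ++ B) (t + 1) t.succ_pos (armStep t r m) m hAB (by simp at hn ⊢; omega)
    push_cast at hle
    refine ⟨m :: Q, (hperm.cons m).trans List.perm_middle.symm,
      (List.pairwise_cons.2 ⟨fun x hx => hmax x (hsub x (hperm.subset hx)),
        hsorted.pairwise⟩).sortedGE,
      (armVList_append_cons_le_of_le H hp hm ht (hL m hmem).1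
        (fun x hx => hAB x (by simp [hx])) hle).trans ?_⟩
    rw [sum_eq_sum_Ico_succ_bot (show t < t + (n + 1) by omega),
      show t + (n + 1) = t + 1 + n by omega, mul_assoc ηm m, mul_assoc ηm c]
    gcongr _ + ηm * ?_ * _ * _
    exact mul_max_sub_le_mul_max_sub (hL m hmem).1 (hL m hmem).2 r

end Rearrangement

section Bridge

variable {H : ℝ → ℝ} {ηp ηm : ℝ} {t T : ℕ} {r : ℝ} {p : ℕ → ℝ}

lemma armRef_self (ht : t ≠ 0) : armRef t r p t = r := by
  simp [armRef, ht]

lemma armRef_armStep {s : ℕ} (hts : t < s) :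
    armRef (t + 1) (armStep t r (p t)) p s = armRef t r p s := by
  rw [armRef, armRef, sum_eq_sum_Ico_succ_bot hts, Nat.cast_succ, succ_mul_armStep, add_assoc]

lemma armV_eq_armRev_add (ht : t ≠ 0) (htT : t ≤ T) :
    armV H ηp ηm t T r p =
      armRev H ηp ηm (p t) r + armV H ηp ηm (t + 1) T (armStep t r (p t)) p := by
  rw [armV, ← insert_Icc_add_one_left_eq_Icc htT, sum_insert (by simp), armRef_self ht, armV]
  congr 1
  refine sum_congr rfl fun s hs => ?_
  rw [armRef_armStep (by simp at hs; omega)]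

lemma armV_eq_armVList (ht : t ≠ 0) :
    armV H ηp ηm t T r p = armVList H ηp ηm t r ((List.range' t (T + 1 - t)).map p) := by
  induction hn : T + 1 - t generalizing t r with
  | zero =>
    rw [armV, Icc_eq_empty (by omega)]
    rfl
  | succ n ih =>
    rw [armV_eq_armRev_add ht (by omega), ih t.succ_ne_zero (by omega), List.range'_succ]
    rfl

lemma armV_congr {p' : ℕ → ℝ} (h : Set.EqOn p p' (Icc t T)) :
    armV H ηp ηm t T r p = armV H ηp ηm t T r p' := by
  have href : ∀ s ∈ Icc t T, armRef t r p s = armRef t r p' s := fun s hs => by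
    simp only [mem_Icc] at hs
    rw [armRef, armRef, sum_congr rfl fun k hk => h (by simp at hk ⊢; omega)]
  exact sum_congr rfl fun s hs => by rw [h hs, href s hs]

end Bridge

section Optimum

variable {H : ℝ → ℝ} {ηp ηm pbar : ℝ} {t T : ℕ} {r : ℝ}

lemma continuousOn_armV (hH : ContinuousOn H (Set.Icc 0 pbar)) :
    ContinuousOn (armV H ηp ηm t T r) (Set.univ.pi fun _ => Set.Icc 0 pbar) := by
  refine continuousOn_finsetSum _ fun s _ => ?_
  have hmaps : Set.MapsTo (fun p : ℕ → ℝ => p s) (Set.univ.pi fun _ => Set.Icc 0 pbar)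
      (Set.Icc 0 pbar) := fun p hp => hp s trivial
  unfold armRev armRef
  fun_prop

lemma exists_armVStar_eq_armV (hpbar : 0 ≤ pbar) (hH : ContinuousOn H (Set.Icc 0 pbar)) :
    ∃ p : ℕ → ℝ, (∀ s, p s ∈ Set.Icc 0 pbar) ∧
      armVStar H ηp ηm t T pbar r = armV H ηp ηm t T r p := by
  obtain ⟨p, hpK, hmax⟩ := (isCompact_univ_pi fun _ => isCompact_Icc).exists_isMaxOn
    ⟨fun _ => 0, fun _ _ => Set.left_mem_Icc.2 hpbar⟩
    (continuousOn_armV (ηp := ηp) (ηm := ηm) (t := t) (T := T) (r := r) hH)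
  refine ⟨p, fun s => hpK s trivial, IsGreatest.csSup_eq ⟨⟨p, fun s _ => hpK s trivial, rfl⟩, ?_⟩⟩
  rintro _ ⟨p', hp', rfl⟩
  let clamp : ℕ → ℝ := fun s => Set.projIcc 0 pbar hpbar (p' s)
  calc armV H ηp ηm t T r p' = armV H ηp ηm t T r clamp :=
        armV_congr fun s hs => by simp [clamp, Set.projIcc_of_mem hpbar (hp' s hs)]
    _ ≤ armV H ηp ηm t T r p := hmax fun s _ => Subtype.prop _

end Optimum

lemma List.map_range'_getD_sub {α : Type*} (Q : List α) (t : ℕ) (d : α) :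
    (List.range' t Q.length).map (fun s => Q.getD (s - t) d) = Q := by
  refine List.ext_getElem (by simp) fun i _ hi => ?_
  simp [List.getElem?_eq_getElem hi]

lemma exists_antitoneOn_armV_le_add {ηp ηm pbar r : ℝ} {t T : ℕ} (H : ℝ → ℝ) (hp : 0 ≤ ηp)
    (hm : 0 ≤ ηm) (ht : t ≠ 0) (hr : r ≤ pbar) (p : ℕ → ℝ)
    (hpbar : ∀ s ∈ Icc t T, p s ∈ Set.Icc 0 pbar) :
    ∃ q : ℕ → ℝ, (∀ s ∈ Icc t T, q s ∈ Set.Icc 0 pbar) ∧ AntitoneOn q ↑(Icc t T) ∧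
      armV H ηp ηm t T r p ≤
        armV H ηp ηm t T r q + ηm * pbar * (pbar - r) * t * ∑ s ∈ Icc t T, (1 : ℝ) / s := by
  set L := (List.range' t (T + 1 - t)).map p
  have hL (x : ℝ) (hx : x ∈ L) : 0 ≤ x ∧ x ≤ pbar := by
    obtain ⟨s, hs, rfl⟩ := List.mem_map.1 hx
    exact hpbar s (by simp at hs ⊢; omega)
  obtain ⟨Q, hperm, hsorted, hle⟩ :=
    exists_sortedGE_perm_armVList_le H hp hm L t (Nat.pos_of_ne_zero ht) r pbar hL
  have hlen : Q.length = T + 1 - t := hperm.length_eq.trans (by simp [L])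
  set q : ℕ → ℝ := fun s => Q.getD (s - t) 0
  have hq (s : ℕ) (hs : s ∈ Icc t T) : q s = Q[s - t]'(by simp at hs; omega) :=
    List.getD_eq_getElem _ _ _
  refine ⟨q, fun s hs => ?_, fun a ha b hb hab => ?_, ?_⟩
  · rw [hq s hs]
    exact hL _ (hperm.subset (List.getElem_mem _))
  · rw [hq a ha, hq b hb]
    exact hsorted.getElem_ge_getElem_of_le (by omega)
  · have hsum : Ico t (t + L.length) = Icc t T := by
      ext s
      simp [L]
      omega
    have hqQ : (List.range' t (T + 1 - t)).map q = Q := hlen ▸ List.map_range'_getD_sub Q t 0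
    rw [hsum, max_eq_left (sub_nonneg.2 hr)] at hle
    rwa [armV_eq_armVList ht, armV_eq_armVList ht, hqQ]

theorem markdown_near_optimal_general
    (pbar : ℝ) (H : ℝ → ℝ)
    (hH : ContinuousOn H (Set.Icc (0 : ℝ) pbar))
    (ηp ηm : ℝ) (hηp : 0 ≤ ηp) (hηm : 0 ≤ ηm)
    (t1 T : ℕ) (ht1 : 1 ≤ t1)
    (r : ℝ) (hr : r ∈ Set.Icc 0 pbar) :
    ∃ q : ℕ → ℝ,
      (∀ t ∈ Finset.Icc t1 T, q t ∈ Set.Icc 0 pbar) ∧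
      AntitoneOn q ↑(Finset.Icc t1 T) ∧
      armVStar H ηp ηm t1 T pbar r - armV H ηp ηm t1 T r q ≤
        pbar * (t1 : ℝ) * (pbar - r) * (ηp + ηm) * ∑ t ∈ Finset.Icc t1 T, (1 : ℝ) / (t : ℝ) := by
  have hpbar : 0 ≤ pbar := hr.1.trans hr.2
  obtain ⟨p, hp, hopt⟩ := exists_armVStar_eq_armV (ηp := ηp) (ηm := ηm) (t := t1) (T := T)
    (r := r) hpbar hH
  obtain ⟨q, hq, hanti, hle⟩ :=
    exists_antitoneOn_armV_le_add (t := t1) (T := T) H hηp hηm (by omega) hr.2 p fun s _ => hp s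
  refine ⟨q, hq, hanti, ?_⟩
  have hηp_term : 0 ≤ ηp * (pbar * (pbar - r) * t1 * ∑ t ∈ Icc t1 T, (1 : ℝ) / t) := by
    have := sub_nonneg.2 hr.2
    positivity
  rw [hopt]
  linarith

/-- Near-optimality of markdown pricing: there is a non-increasing price sequence whose
revenue is within `p̄·t1·(p̄−r)·(η⁺+η⁻)·Σ_{t=t1}^{T} 1/t` of the optimal revenue. -/
theorem markdown_near_optimal
    (pbar : ℝ) (hpbar : 0 < pbar) (H : ℝ → ℝ)
    (hH : ContinuousOn H (Set.Icc (0 : ℝ) pbar))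
    (ηp ηm : ℝ) (hηp : 0 ≤ ηp) (hηm : 0 ≤ ηm)
    (t1 T : ℕ) (ht1 : 1 ≤ t1) (hT : t1 ≤ T)
    (r : ℝ) (hr : r ∈ Set.Icc 0 pbar) :
    ∃ q : ℕ → ℝ,
      (∀ t ∈ Finset.Icc t1 T, q t ∈ Set.Icc 0 pbar) ∧
      AntitoneOn q ↑(Finset.Icc t1 T) ∧
      armVStar H ηp ηm t1 T pbar r - armV H ηp ηm t1 T r q ≤
        pbar * (t1 : ℝ) * (pbar - r) * (ηp + ηm) * ∑ t ∈ Finset.Icc t1 T, (1 : ℝ) / (t : ℝ) :=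
  markdown_near_optimal_general pbar H hH ηp ηm hηp hηm t1 T ht1 r hr
end

section
/- Consider linear demand H(p) = b − a·p with a > 0, b > 0, symmetric reference effects η⁺ = η⁻ = η ≥ 0, horizon T ≥ 1, starting reference price r1 ∈ [0,p̄], and let H_T = Σ_{t=1}^{T} (1/t). The total ARM revenue of the constant price sequence p_t ≡ p equals f(p) := T·p·(b − a·p) + η·p·(r1 − p)·H_T = (T·b + η·r1·H_T)·p − (T·a + η·H_T)·p². Moreover, if p̂ := (T·b + η·r1·H_T)/(2·(T·a + η·H_T)) lies in [0, p̄], then the maximum of f over [0,p̄] is attained at p̂ and equals (T·b + η·r1·H_T)² / (4·(T·a + η·H_T)); in particular, when r1 = 0 the revenue of every fixed price is at most T·b²/(4a). -/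
/-- The harmonic sum `H_T = Σ_{t=1}^{T} 1/t`. -/
noncomputable def harm (T : ℕ) : ℝ := ∑ t ∈ Finset.Icc 1 T, (1 : ℝ) / (t : ℝ)

/-
With a constant price `p` the ARM reference price at round `t` is `p + (r₁ - p)/t`, so the
reference gap shrinks like `1/t` and round `t` earns `p·H(p) + η·p·(r₁ - p)/t`; summing gives
a concave quadratic in `p`, maximised at its vertex.
-/

lemma armRef_const {t1 t : ℕ} (h : t1 ≤ t) (ht : t ≠ 0) (r p : ℝ) :
    armRef t1 r (fun _ => p) t = p + t1 * (r - p) / t := by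
  have htR : (t : ℝ) ≠ 0 := by exact_mod_cast ht
  rw [armRef, Finset.sum_const, Nat.card_Ico, nsmul_eq_mul, Nat.cast_sub h]
  field_simp
  ring

lemma armRev_symmetric (H : ℝ → ℝ) (η x r : ℝ) :
    armRev H η η x r = x * (H x + η * (r - x)) := by
  rw [armRev]
  rcases le_total r x with h | h
  · rw [max_eq_right (by linarith), max_eq_left (by linarith)]
    ring
  · rw [max_eq_left (by linarith), max_eq_right (by linarith)]
    ring

lemma armV_const_symmetric (H : ℝ → ℝ) (η r p : ℝ) (T : ℕ) :
    armV H η η 1 T r (fun _ => p) = T * (p * H p) + η * p * (r - p) * harm T := by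
  have round (t : ℕ) (ht : t ∈ Finset.Icc 1 T) :
      armRev H η η p (armRef 1 r (fun _ => p) t) = p * H p + η * p * (r - p) * (1 / t) := by
    have ht1 := (Finset.mem_Icc.mp ht).1
    rw [armRev_symmetric, armRef_const ht1 (by omega)]
    ring
  rw [armV, Finset.sum_congr rfl round, Finset.sum_add_distrib, Finset.sum_const, Nat.card_Icc,
    ← Finset.mul_sum, harm, nsmul_eq_mul, Nat.add_sub_cancel]

lemma harm_nonneg (T : ℕ) : 0 ≤ harm T :=
  Finset.sum_nonneg fun _ _ => by positivity

lemma quadratic_le_vertex {A B : ℝ} (hB : 0 < B) (p : ℝ) :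
    A * p - B * p ^ 2 ≤ A ^ 2 / (4 * B) := by
  rw [le_div_iff₀ (by positivity)]
  nlinarith [sq_nonneg (2 * B * p - A)]

lemma quadratic_at_vertex {A B : ℝ} (hB : B ≠ 0) :
    A * (A / (2 * B)) - B * (A / (2 * B)) ^ 2 = A ^ 2 / (4 * B) := by
  field_simp
  ring

theorem fixed_price_revenue_linear_general
    (pbar a b η : ℝ) (ha : 0 < a) (hη : 0 ≤ η)
    (T : ℕ) (hT : 1 ≤ T) (r1 : ℝ) :
    (∀ p ∈ Set.Icc (0 : ℝ) pbar,
      armV (fun x => b - a * x) η η 1 T r1 (fun _ => p)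
          = (T : ℝ) * (p * (b - a * p)) + η * p * (r1 - p) * harm T ∧
      armV (fun x => b - a * x) η η 1 T r1 (fun _ => p)
          = ((T : ℝ) * b + η * r1 * harm T) * p - ((T : ℝ) * a + η * harm T) * p ^ 2) ∧
    (((T : ℝ) * b + η * r1 * harm T) / (2 * ((T : ℝ) * a + η * harm T)) ∈ Set.Icc (0 : ℝ) pbar →
      (∀ p ∈ Set.Icc (0 : ℝ) pbar,
        armV (fun x => b - a * x) η η 1 T r1 (fun _ => p) ≤
          armV (fun x => b - a * x) η η 1 T r1
            (fun _ => ((T : ℝ) * b + η * r1 * harm T) / (2 * ((T : ℝ) * a + η * harm T)))) ∧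
      armV (fun x => b - a * x) η η 1 T r1
          (fun _ => ((T : ℝ) * b + η * r1 * harm T) / (2 * ((T : ℝ) * a + η * harm T)))
        = ((T : ℝ) * b + η * r1 * harm T) ^ 2 / (4 * ((T : ℝ) * a + η * harm T))) ∧
    (r1 = 0 → ∀ p ∈ Set.Icc (0 : ℝ) pbar,
      armV (fun x => b - a * x) η η 1 T r1 (fun _ => p) ≤ (T : ℝ) * b ^ 2 / (4 * a)) := by
  set A : ℝ := (T : ℝ) * b + η * r1 * harm T
  set B : ℝ := (T : ℝ) * a + η * harm T
  have hTa : 0 < (T : ℝ) * a := mul_pos (by exact_mod_cast hT) ha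
  have hηH : 0 ≤ η * harm T := mul_nonneg hη (harm_nonneg T)
  have hB : 0 < B := by positivity
  have revenue (p : ℝ) := armV_const_symmetric (fun x => b - a * x) η r1 p T
  have quadratic (p : ℝ) :
      armV (fun x => b - a * x) η η 1 T r1 (fun _ => p) = A * p - B * p ^ 2 := by
    rw [revenue]
    ring
  have vertex : A * (A / (2 * B)) - B * (A / (2 * B)) ^ 2 = A ^ 2 / (4 * B) :=
    quadratic_at_vertex hB.ne'
  refine ⟨fun p _ => ⟨revenue p, quadratic p⟩, fun _ => ⟨fun p _ => ?_, ?_⟩, fun hr0 p _ => ?_⟩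
  · rw [quadratic, quadratic, vertex]
    exact quadratic_le_vertex hB p
  · rw [quadratic, vertex]
  · have hA : A = T * b := by simp [A, hr0]
    calc armV (fun x => b - a * x) η η 1 T r1 (fun _ => p)
        ≤ (T * b) * p - (T * a) * p ^ 2 := by
          rw [quadratic, hA]
          nlinarith [mul_nonneg hηH (sq_nonneg p)]
      _ ≤ (T * b) ^ 2 / (4 * (T * a)) := quadratic_le_vertex hTa p
      _ = T * b ^ 2 / (4 * a) := by
          field_simp

/-- Fixed-price revenue for linear demand with symmetric reference effects: the total ARM
revenue of the constant price `p` is the quadratic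
`f(p) = T·p·(b−a·p) + η·p·(r1−p)·H_T = (T·b + η·r1·H_T)·p − (T·a + η·H_T)·p²`; if
`p̂ = (T·b + η·r1·H_T)/(2(T·a + η·H_T)) ∈ [0,p̄]`, this is maximized over `[0,p̄]` at `p̂`
with value `(T·b + η·r1·H_T)²/(4(T·a + η·H_T))`; and when `r1 = 0` every fixed price earns
at most `T·b²/(4a)`. -/
theorem fixed_price_revenue_linear
    (pbar a b η : ℝ) (hpbar : 0 < pbar) (ha : 0 < a) (hb : 0 < b) (hη : 0 ≤ η)
    (T : ℕ) (hT : 1 ≤ T) (r1 : ℝ) (hr1 : r1 ∈ Set.Icc 0 pbar) :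
    (∀ p ∈ Set.Icc (0 : ℝ) pbar,
      armV (fun x => b - a * x) η η 1 T r1 (fun _ => p)
          = (T : ℝ) * (p * (b - a * p)) + η * p * (r1 - p) * harm T ∧
      armV (fun x => b - a * x) η η 1 T r1 (fun _ => p)
          = ((T : ℝ) * b + η * r1 * harm T) * p - ((T : ℝ) * a + η * harm T) * p ^ 2) ∧
    (((T : ℝ) * b + η * r1 * harm T) / (2 * ((T : ℝ) * a + η * harm T)) ∈ Set.Icc (0 : ℝ) pbar →
      (∀ p ∈ Set.Icc (0 : ℝ) pbar,
        armV (fun x => b - a * x) η η 1 T r1 (fun _ => p) ≤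
          armV (fun x => b - a * x) η η 1 T r1
            (fun _ => ((T : ℝ) * b + η * r1 * harm T) / (2 * ((T : ℝ) * a + η * harm T)))) ∧
      armV (fun x => b - a * x) η η 1 T r1
          (fun _ => ((T : ℝ) * b + η * r1 * harm T) / (2 * ((T : ℝ) * a + η * harm T)))
        = ((T : ℝ) * b + η * r1 * harm T) ^ 2 / (4 * ((T : ℝ) * a + η * harm T))) ∧
    (r1 = 0 → ∀ p ∈ Set.Icc (0 : ℝ) pbar,
      armV (fun x => b - a * x) η η 1 T r1 (fun _ => p) ≤ (T : ℝ) * b ^ 2 / (4 * a)) :=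
  fixed_price_revenue_linear_general pbar a b η ha hη T hT r1
end

section
/- Fix integers 1 ≤ t1 < T and a real c ≥ 0, and set H = Σ_{s=t1+1}^{T} (1/s). Let M be the real symmetric matrix indexed by t, u ∈ {t1, …, T} with diagonal entries M_{tt} = 1 and off-diagonal entries M_{tu} = −c/max(t,u) for t ≠ u. Then every eigenvalue λ of M satisfies 1 − c·H ≤ λ ≤ 1 + c·H; in particular, if c·H < 1 then M is positive definite. Consequently, for linear demand H(p) = b − a·p with symmetric reference effects η⁺ = η⁻ = η ≥ 0 and a + η > 0, the total ARM revenue V^p(r, t1) = Σ_{t=t1}^{T} p_t·(b − a·p_t + η·(r_t − p_t)) is a quadratic function of the price vector p whose (constant) Hessian equals −2(a+η)·M with c = η/(2(a+η)), so every eigenvalue of this Hessian lies in [−2(a+η)(1 + cH), −2(a+η)(1 − cH)]. -/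
open Matrix

/-- ARM reference price at time `t` for a price vector indexed by the window `{t1,…,T}`. -/
noncomputable def refSub (t1 T : ℕ) (r : ℝ) (p : ↥(Finset.Icc t1 T) → ℝ)
    (t : ↥(Finset.Icc t1 T)) : ℝ :=
  ((t1 : ℝ) * r + ∑ s : ↥(Finset.Icc t1 T), if (s : ℕ) < (t : ℕ) then p s else 0) /
    ((t : ℕ) : ℝ)

/-- Total ARM revenue for linear demand `b − a·p` with symmetric reference effects `η`,
viewed as a function of the price vector `p` over the window `{t1,…,T}`. -/
noncomputable def armVQuad (t1 T : ℕ) (a b η r : ℝ) (p : ↥(Finset.Icc t1 T) → ℝ) : ℝ :=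
  ∑ t : ↥(Finset.Icc t1 T), p t * (b - a * p t + η * (refSub t1 T r p t - p t))

/-!
The off-diagonal entries of row `t` of `M` have absolute values summing to
`c · ∑_{u ≠ t} 1/max(t,u) ≤ c·H`: sending `u < t` to `u + 1` and `u > t` to `u` injects the
other indices into `{t1+1,…,T}` without decreasing `1/max(t,u)`. Gershgorin's theorem therefore
puts every eigenvalue of `s • M` within `|s|·c·H` of `s`, which gives both eigenvalue bounds, and
positive definiteness follows since `M` is symmetric.

For the Hessian, write `r_t = t1·r/t + (L p)_t` with `L` the strictly lower-triangular averaging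
matrix. Then `V` is `p ⬝ A p` plus a linear term, `A = -(a+η)·1 + η·L`, so its second
difference is `q ⬝ (A + Aᵀ) q`, and `A + Aᵀ = -2(a+η)·(1 - c·(L + Lᵀ)) = -2(a+η)·M`.
-/

open Finset

theorem exists_dist_diag_le_of_mulVec_eq_smul {K n : Type*} [NormedField K] [Fintype n]
    [DecidableEq n] {A : Matrix n n K} {μ : K} {v : n → K} (hv : v ≠ 0)
    (h : A *ᵥ v = μ • v) : ∃ k, dist μ (A k k) ≤ ∑ j ∈ univ.erase k, ‖A k j‖ :=
  eigenvalue_mem_ball (Module.End.hasEigenvalue_of_hasEigenvector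
    ⟨Module.End.mem_eigenspace_iff.2 (by rwa [Matrix.toLin'_apply]), hv⟩)

open scoped ComplexOrder in
theorem Matrix.IsHermitian.posDef_of_forall_eigenvalue_pos {𝕜 n : Type*} [RCLike 𝕜]
    [Fintype n] [DecidableEq n] {A : Matrix n n 𝕜} (hA : A.IsHermitian)
    (h : ∀ (μ : ℝ) (v : n → 𝕜), v ≠ 0 → A *ᵥ v = μ • v → 0 < μ) : A.PosDef :=
  hA.posDef_iff_eigenvalues_pos.2 fun i => h _ _
    (by simpa using hA.eigenvectorBasis.toBasis.ne_zero i) (hA.mulVec_eigenvectorBasis i)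

theorem Finset.sum_univ_erase_coe {α β : Type*} [AddCommGroup β] [DecidableEq α] (s : Finset α)
    (k : s) (f : α → β) : ∑ j ∈ univ.erase k, f j = ∑ u ∈ s.erase k, f u := by
  rw [sum_erase_eq_sub (mem_univ k), sum_erase_eq_sub k.2, sum_coe_sort s f]

theorem sum_erase_one_div_max_le {t1 T t : ℕ} (ht : t ∈ Icc t1 T) :
    ∑ u ∈ (Icc t1 T).erase t, (1 : ℝ) / ((max t u : ℕ) : ℝ)
      ≤ ∑ s ∈ Icc (t1 + 1) T, (1 : ℝ) / (s : ℝ) := by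
  set g : ℕ → ℕ := fun u => if u < t then u + 1 else u
  have hmem : ∀ u ∈ (Icc t1 T).erase t, g u ∈ Icc (t1 + 1) T ∧ g u ≤ max t u := by
    intro u hu
    simp only [mem_erase, mem_Icc] at ht hu ⊢
    simp only [g]
    split_ifs <;> omega
  have hinj : Set.InjOn g ((Icc t1 T).erase t) := by
    intro x hx y hy hxy
    simp only [coe_erase, coe_Icc, Set.mem_sdiff, Set.mem_Icc, Set.mem_singleton_iff, g]
      at hx hy hxy
    split_ifs at hxy <;> omega
  calc ∑ u ∈ (Icc t1 T).erase t, (1 : ℝ) / ((max t u : ℕ) : ℝ)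
      ≤ ∑ u ∈ (Icc t1 T).erase t, (1 : ℝ) / (g u : ℝ) := by
        refine sum_le_sum fun u hu => ?_
        obtain ⟨hg, hg_le⟩ := hmem u hu
        have hg_pos : 0 < g u := t1.succ_pos.trans_le (mem_Icc.1 hg).1
        exact one_div_le_one_div_of_le (by exact_mod_cast hg_pos) (by exact_mod_cast hg_le)
    _ = ∑ s ∈ ((Icc t1 T).erase t).image g, (1 : ℝ) / (s : ℝ) :=
        (sum_image (f := fun s : ℕ => (1 : ℝ) / s) hinj).symm
    _ ≤ ∑ s ∈ Icc (t1 + 1) T, (1 : ℝ) / (s : ℝ) := by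
        refine sum_le_sum_of_subset_of_nonneg ?_ fun _ _ _ => by positivity
        exact image_subset_iff.2 fun u hu => (hmem u hu).1

theorem secondDifference_of_quadratic {R n : Type*} [CommRing R] [Fintype n]
    (A : Matrix n n R) (ℓ : n → R) (f : (n → R) → R) (hf : ∀ x, f x = x ⬝ᵥ A *ᵥ x + ℓ ⬝ᵥ x)
    (p q : n → R) :
    f (p + q) + f (p - q) - 2 * f p = q ⬝ᵥ (A + Aᵀ) *ᵥ q := by
  simp only [hf, add_mulVec, mulVec_add, mulVec_sub, dotProduct_add, dotProduct_sub,
    add_dotProduct, sub_dotProduct, mulVec_transpose, dotProduct_comm q (q ᵥ* A),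
    ← dotProduct_mulVec]
  ring

section Window

variable {t1 T : ℕ}

noncomputable def pastAverage (t1 T : ℕ) : Matrix (Icc t1 T) (Icc t1 T) ℝ :=
  fun t s => if (s : ℕ) < t then 1 / ((t : ℕ) : ℝ) else 0

theorem refSub_eq (r : ℝ) (p : Icc t1 T → ℝ) (t : Icc t1 T) :
    refSub t1 T r p t = t1 * r / ((t : ℕ) : ℝ) + (pastAverage t1 T *ᵥ p) t := by
  simp only [refSub, mulVec, dotProduct, pastAverage, ite_mul, one_div_mul_eq_div, zero_mul,
    sum_div, add_div, ite_div, zero_div]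

theorem armVQuad_eq (a b η r : ℝ) (p : Icc t1 T → ℝ) :
    armVQuad t1 T a b η r p = p ⬝ᵥ (-(a + η) • 1 + η • pastAverage t1 T) *ᵥ p
      + (fun t : Icc t1 T => b + η * (t1 * r / ((t : ℕ) : ℝ))) ⬝ᵥ p := by
  simp only [armVQuad, refSub_eq, add_mulVec, smul_mulVec, one_mulVec, dotProduct,
    ← sum_add_distrib, Pi.add_apply, Pi.smul_apply, smul_eq_mul]
  exact sum_congr rfl fun t _ => by ring

theorem eq_one_sub_smul_pastAverage {c : ℝ} {M : Matrix (Icc t1 T) (Icc t1 T) ℝ}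
    (hM : ∀ t u : Icc t1 T,
      M t u = if (t : ℕ) = (u : ℕ) then 1 else -c / ((max (t : ℕ) (u : ℕ) : ℕ) : ℝ)) :
    M = 1 - c • (pastAverage t1 T + (pastAverage t1 T)ᵀ) := by
  ext t u
  simp only [hM, Matrix.sub_apply, one_apply, Matrix.smul_apply, Matrix.add_apply,
    transpose_apply, pastAverage, smul_eq_mul]
  rcases lt_trichotomy (t : ℕ) u with h | h | h
  · simp [h, h.ne, h.not_gt, h.le, Subtype.ext_iff, div_eq_mul_inv]
  · simp [Subtype.ext h]
  · simp [h, h.ne', h.not_gt, h.le, Subtype.ext_iff, div_eq_mul_inv]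

theorem abs_sub_le_of_smul_mulVec_eq {c : ℝ} {M : Matrix (Icc t1 T) (Icc t1 T) ℝ} (hc : 0 ≤ c)
    (hM : ∀ t u : Icc t1 T,
      M t u = if (t : ℕ) = (u : ℕ) then 1 else -c / ((max (t : ℕ) (u : ℕ) : ℕ) : ℝ))
    {s μ : ℝ} {v : Icc t1 T → ℝ} (hv : v ≠ 0) (h : (s • M) *ᵥ v = μ • v) :
    |μ - s| ≤ |s| * (c * ∑ n ∈ Icc (t1 + 1) T, (1 : ℝ) / (n : ℝ)) := by
  obtain ⟨k, hk⟩ := exists_dist_diag_le_of_mulVec_eq_smul hv h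
  rw [Real.dist_eq, Matrix.smul_apply, hM, if_pos rfl, smul_eq_mul, mul_one] at hk
  have hrow : ∀ j ∈ univ.erase k,
      ‖(s • M) k j‖ = |s| * c * (1 / ((max (k : ℕ) j : ℕ) : ℝ)) := by
    intro j hj
    rw [Matrix.smul_apply, hM, if_neg (Subtype.coe_ne_coe.2 (ne_of_mem_erase hj).symm),
      smul_eq_mul, Real.norm_eq_abs, abs_mul, abs_div, abs_neg, abs_of_nonneg hc, Nat.abs_cast]
    ring
  calc |μ - s|
      ≤ |s| * c * ∑ u ∈ (Icc t1 T).erase k, 1 / ((max (k : ℕ) u : ℕ) : ℝ) := by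
        rwa [sum_congr rfl hrow, ← mul_sum, sum_univ_erase_coe (Icc t1 T) k
          fun u => 1 / ((max (k : ℕ) u : ℕ) : ℝ)] at hk
    _ ≤ |s| * (c * ∑ n ∈ Icc (t1 + 1) T, (1 : ℝ) / (n : ℝ)) := by
        rw [mul_assoc]
        gcongr
        exact sum_erase_one_div_max_le k.2

theorem add_transpose_eq_smul_one_sub_pastAverage {a η c : ℝ} (hne : a + η ≠ 0)
    (hc : c = η / (2 * (a + η))) :
    (-(a + η) • 1 + η • pastAverage t1 T) + (-(a + η) • 1 + η • pastAverage t1 T)ᵀ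
      = -(2 * (a + η)) • (1 - c • (pastAverage t1 T + (pastAverage t1 T)ᵀ)) := by
  have hη : -(2 * (a + η)) * c = -η := by
    rw [hc]
    field_simp
  rw [transpose_add, transpose_smul, transpose_smul, transpose_one, smul_sub, smul_smul, hη]
  module

end Window

theorem arm_hessian_eigenvalue_bounds_general
    (t1 T : ℕ)
    (c : ℝ) (hc : 0 ≤ c)
    (M : Matrix ↥(Finset.Icc t1 T) ↥(Finset.Icc t1 T) ℝ)
    (hM : ∀ t u : ↥(Finset.Icc t1 T),
      M t u = if (t : ℕ) = (u : ℕ) then 1 else -c / ((max (t : ℕ) (u : ℕ) : ℕ) : ℝ)) :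
    (∀ (lam : ℝ) (v : ↥(Finset.Icc t1 T) → ℝ), v ≠ 0 → M.mulVec v = lam • v →
      1 - c * (∑ s ∈ Finset.Icc (t1 + 1) T, (1 : ℝ) / (s : ℝ)) ≤ lam ∧
      lam ≤ 1 + c * (∑ s ∈ Finset.Icc (t1 + 1) T, (1 : ℝ) / (s : ℝ))) ∧
    (c * (∑ s ∈ Finset.Icc (t1 + 1) T, (1 : ℝ) / (s : ℝ)) < 1 → M.PosDef) ∧
    (∀ a b η r : ℝ, 0 < a + η → 0 ≤ η → c = η / (2 * (a + η)) →
      (∀ p q : ↥(Finset.Icc t1 T) → ℝ,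
        armVQuad t1 T a b η r (p + q) + armVQuad t1 T a b η r (p - q) - 2 * armVQuad t1 T a b η r p
          = (-(2 * (a + η))) * dotProduct q (M.mulVec q)) ∧
      (∀ (lam : ℝ) (v : ↥(Finset.Icc t1 T) → ℝ), v ≠ 0 →
        ((-(2 * (a + η))) • M).mulVec v = lam • v →
        (-(2 * (a + η))) * (1 + c * (∑ s ∈ Finset.Icc (t1 + 1) T, (1 : ℝ) / (s : ℝ))) ≤ lam ∧
        lam ≤ (-(2 * (a + η))) * (1 - c * (∑ s ∈ Finset.Icc (t1 + 1) T, (1 : ℝ) / (s : ℝ))))) := by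
  set H := ∑ s ∈ Finset.Icc (t1 + 1) T, (1 : ℝ) / (s : ℝ)
  have heig : ∀ (lam : ℝ) (v : Icc t1 T → ℝ), v ≠ 0 → M *ᵥ v = lam • v →
      1 - c * H ≤ lam ∧ lam ≤ 1 + c * H := by
    intro lam v hv h
    have := abs_sub_le_of_smul_mulVec_eq hc hM (s := 1) hv (by rwa [one_smul])
    rw [abs_one, one_mul, abs_sub_le_iff] at this
    exact ⟨by linear_combination this.2, by linear_combination this.1⟩
  have hMeq := eq_one_sub_smul_pastAverage hM
  refine ⟨heig, fun hcH => ?_,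
    fun a b η r hpos _ hceq => ⟨fun p q => ?_, fun lam v hv h => ?_⟩⟩
  · have hMherm : M.IsHermitian := by
      rw [isHermitian_iff_isSymm, hMeq]
      exact isSymm_one.sub ((isSymm_add_transpose_self _).smul c)
    exact hMherm.posDef_of_forall_eigenvalue_pos fun μ v hv h => by linarith [(heig μ v hv h).1]
  · rw [secondDifference_of_quadratic _ _ _ (armVQuad_eq a b η r) p q,
      add_transpose_eq_smul_one_sub_pastAverage hpos.ne' hceq, ← hMeq, smul_mulVec,
      dotProduct_smul, smul_eq_mul]
  · have := abs_sub_le_of_smul_mulVec_eq hc hM hv h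
    rw [abs_neg, abs_of_pos (mul_pos two_pos hpos), abs_sub_le_iff] at this
    exact ⟨by linear_combination this.2, by linear_combination this.1⟩

/-- Eigenvalue bounds for the matrix `M` with unit diagonal and off-diagonal entries
`−c/max(t,u)`: every eigenvalue lies in `[1 − c·H, 1 + c·H]` with
`H = Σ_{s=t1+1}^{T} 1/s`; if `c·H < 1` then `M` is positive definite. Consequently, with
`c = η/(2(a+η))`, the total ARM revenue for linear demand with symmetric effects is a
quadratic whose constant Hessian is `−2(a+η)·M`, and every eigenvalue of this Hessian lies
in `[−2(a+η)(1+cH), −2(a+η)(1−cH)]`. -/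
theorem arm_hessian_eigenvalue_bounds
    (t1 T : ℕ) (ht1 : 1 ≤ t1) (htT : t1 < T)
    (c : ℝ) (hc : 0 ≤ c)
    (M : Matrix ↥(Finset.Icc t1 T) ↥(Finset.Icc t1 T) ℝ)
    (hM : ∀ t u : ↥(Finset.Icc t1 T),
      M t u = if (t : ℕ) = (u : ℕ) then 1 else -c / ((max (t : ℕ) (u : ℕ) : ℕ) : ℝ)) :
    (∀ (lam : ℝ) (v : ↥(Finset.Icc t1 T) → ℝ), v ≠ 0 → M.mulVec v = lam • v →
      1 - c * (∑ s ∈ Finset.Icc (t1 + 1) T, (1 : ℝ) / (s : ℝ)) ≤ lam ∧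
      lam ≤ 1 + c * (∑ s ∈ Finset.Icc (t1 + 1) T, (1 : ℝ) / (s : ℝ))) ∧
    (c * (∑ s ∈ Finset.Icc (t1 + 1) T, (1 : ℝ) / (s : ℝ)) < 1 → M.PosDef) ∧
    (∀ a b η r : ℝ, 0 < a + η → 0 ≤ η → c = η / (2 * (a + η)) →
      (∀ p q : ↥(Finset.Icc t1 T) → ℝ,
        armVQuad t1 T a b η r (p + q) + armVQuad t1 T a b η r (p - q) - 2 * armVQuad t1 T a b η r p
          = (-(2 * (a + η))) * dotProduct q (M.mulVec q)) ∧
      (∀ (lam : ℝ) (v : ↥(Finset.Icc t1 T) → ℝ), v ≠ 0 →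
        ((-(2 * (a + η))) • M).mulVec v = lam • v →
        (-(2 * (a + η))) * (1 + c * (∑ s ∈ Finset.Icc (t1 + 1) T, (1 : ℝ) / (s : ℝ))) ≤ lam ∧
        lam ≤ (-(2 * (a + η))) * (1 - c * (∑ s ∈ Finset.Icc (t1 + 1) T, (1 : ℝ) / (s : ℝ))))) :=
  arm_hessian_eigenvalue_bounds_general t1 T c hc M hM
end

section
/- Fix integers 1 ≤ t1 < T and reals c ≥ 0, r ≥ 0, p̄ > 0, z ≥ p̄/2. Suppose p : {t1, …, T} → [0, p̄] is non-increasing and satisfies the two linear equations p_{t1} = c·r + z + c·Σ_{s=t1+1}^{T} (p_s/s) and p_T = c·t1·r/T + z + (c/T)·Σ_{s=t1}^{T−1} p_s. Then c·Σ_{s=t1+1}^{T} (1/s) < 1. -/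
/-!
Suppose `c · Σ_{s=t1+1}^{T} 1/s ≥ 1`. Bounding `p s ≥ p_T` in the first row gives
`p_{t1} ≥ z + p_T`, and keeping only the `s = t1` term in the last row gives
`p_T ≥ z + (c/T) p_{t1}`. Chaining the two, `p_{t1} ≥ 2z + (c/T) p_{t1} > p̄` because `2z ≥ p̄`
and `c, p_{t1} > 0`, contradicting `p_{t1} ≤ p̄`.
-/

open Finset

lemma mul_sum_one_div_le_sum_div {ι : Type*} {s : Finset ι} {m : ℝ} {f w : ι → ℝ}
    (hf : ∀ i ∈ s, m ≤ f i) (hw : ∀ i ∈ s, 0 ≤ w i) :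
    m * ∑ i ∈ s, 1 / w i ≤ ∑ i ∈ s, f i / w i := by
  rw [mul_sum]
  refine sum_le_sum fun i hi => ?_
  rw [mul_one_div]
  exact div_le_div_of_nonneg_right (hf i hi) (hw i hi)

section Rows

variable {t1 T : ℕ} {c r z : ℝ} {p : ℕ → ℝ}

lemma add_le_of_first_row (hc : 0 ≤ c) (hr : 0 ≤ r)
    (hS : 1 ≤ c * ∑ s ∈ Icc (t1 + 1) T, (1 : ℝ) / (s : ℝ)) (hpT : 0 ≤ p T)
    (hdec : ∀ s ∈ Icc (t1 + 1) T, p T ≤ p s)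
    (heq1 : p t1 = c * r + z + c * ∑ s ∈ Icc (t1 + 1) T, p s / (s : ℝ)) :
    z + p T ≤ p t1 := by
  set S := ∑ s ∈ Icc (t1 + 1) T, (1 : ℝ) / (s : ℝ)
  have hsum : p T * S ≤ ∑ s ∈ Icc (t1 + 1) T, p s / (s : ℝ) :=
    mul_sum_one_div_le_sum_div hdec fun s _ => s.cast_nonneg
  calc z + p T ≤ z + c * S * p T := by gcongr; exact le_mul_of_one_le_left hpT hS
    _ = z + c * (p T * S) := by ring
    _ ≤ z + c * ∑ s ∈ Icc (t1 + 1) T, p s / (s : ℝ) := by gcongr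
    _ ≤ p t1 := by rw [heq1]; linarith [mul_nonneg hc hr]

lemma add_le_of_last_row (hc : 0 ≤ c) (hr : 0 ≤ r) (ht1T : t1 ≤ T - 1)
    (hpos : ∀ s ∈ Icc t1 (T - 1), 0 ≤ p s)
    (heq2 : p T = c * (t1 : ℝ) * r / (T : ℝ) + z +
      (c / (T : ℝ)) * ∑ s ∈ Icc t1 (T - 1), p s) :
    z + c / T * p t1 ≤ p T := by
  have hsingle : p t1 ≤ ∑ s ∈ Icc t1 (T - 1), p s :=
    single_le_sum hpos (mem_Icc.mpr ⟨le_rfl, ht1T⟩)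
  have : c / T * p t1 ≤ c / T * ∑ s ∈ Icc t1 (T - 1), p s := by gcongr
  have : 0 ≤ c * (t1 : ℝ) * r / (T : ℝ) := by positivity
  linarith

end Rows

theorem markdown_system_diagonally_dominant_general
    (t1 T : ℕ) (htT : t1 < T)
    (c r pbar z : ℝ) (hc : 0 ≤ c) (hr : 0 ≤ r) (hpbar : 0 < pbar) (hz : pbar / 2 ≤ z)
    (p : ℕ → ℝ) (hp : ∀ t ∈ Finset.Icc t1 T, p t ∈ Set.Icc 0 pbar)
    (hmono : AntitoneOn p ↑(Finset.Icc t1 T))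
    (heq1 : p t1 = c * r + z + c * ∑ s ∈ Finset.Icc (t1 + 1) T, p s / (s : ℝ))
    (heq2 : p T = c * (t1 : ℝ) * r / (T : ℝ) + z +
      (c / (T : ℝ)) * ∑ s ∈ Finset.Icc t1 (T - 1), p s) :
    c * ∑ s ∈ Finset.Icc (t1 + 1) T, (1 : ℝ) / (s : ℝ) < 1 := by
  by_contra! hS
  have hT_mem : T ∈ Icc t1 T := mem_Icc.mpr ⟨htT.le, le_rfl⟩
  have hpT : 0 ≤ p T := (hp T hT_mem).1
  have hdec : ∀ s ∈ Icc (t1 + 1) T, p T ≤ p s := fun s hs =>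
    hmono (Icc_subset_Icc (by omega) le_rfl hs) hT_mem (mem_Icc.mp hs).2
  have hfirst := add_le_of_first_row hc hr hS hpT hdec heq1
  have hlast := add_le_of_last_row hc hr (by omega)
    (fun s hs => (hp s (Icc_subset_Icc le_rfl (by omega) hs)).1) heq2
  have hc_pos : 0 < c := hc.lt_of_ne (by rintro rfl; norm_num at hS)
  have hT_pos : (0 : ℝ) < T := by exact_mod_cast (by omega : 0 < T)
  have hcross : 0 < c / T * p t1 := mul_pos (div_pos hc_pos hT_pos) (by linarith)
  linarith [(hp t1 (mem_Icc.mpr ⟨le_rfl, htT.le⟩)).2]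

/-- Diagonal dominance of the optimal markdown linear system: if a non-increasing price
curve `p` valued in `[0, p̄]` satisfies the first and last rows of the system `A·p = b`
(with `z ≥ p̄/2`), then `c·Σ_{s=t1+1}^{T} 1/s < 1`. -/
theorem markdown_system_diagonally_dominant
    (t1 T : ℕ) (ht1 : 1 ≤ t1) (htT : t1 < T)
    (c r pbar z : ℝ) (hc : 0 ≤ c) (hr : 0 ≤ r) (hpbar : 0 < pbar) (hz : pbar / 2 ≤ z)
    (p : ℕ → ℝ) (hp : ∀ t ∈ Finset.Icc t1 T, p t ∈ Set.Icc 0 pbar)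
    (hmono : AntitoneOn p ↑(Finset.Icc t1 T))
    (heq1 : p t1 = c * r + z + c * ∑ s ∈ Finset.Icc (t1 + 1) T, p s / (s : ℝ))
    (heq2 : p T = c * (t1 : ℝ) * r / (T : ℝ) + z +
      (c / (T : ℝ)) * ∑ s ∈ Finset.Icc t1 (T - 1), p s) :
    c * ∑ s ∈ Finset.Icc (t1 + 1) T, (1 : ℝ) / (s : ℝ) < 1 :=
  markdown_system_diagonally_dominant_general t1 T htT c r pbar z hc hr hpbar hz p hp hmono heq1
    heq2
end

section
/- Let λ > 0, let I = [ℓ, u] ⊆ ℝ be a nonempty closed interval, and let f : ℝ → ℝ be differentiable and λ-strongly concave on I, i.e., f(y) ≤ f(x) + f′(x)·(y − x) − (λ/2)·(y − x)² for all x, y ∈ I. Let p* ∈ I satisfy f′(p*) = 0. Let (g_t)_{t ≥ 2} be any real numbers, let p_2 ∈ I, and define the projected gradient iterates p_{t+1} = proj_I(p_t + g_t/(λ·t)) for t ≥ 2, where proj_I is the nearest-point projection onto I. Set δ_t = g_t − f′(p_t). Then for every t ≥ 2: (p_{t+1} − p*)² ≤ (2/(λ·t·(t−1)))·Σ_{i=2}^{t}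 (i−1)·δ_i·(p_i − p*) + (1/(λ²·t·(t−1)))·Σ_{i=2}^{t} g_i². -/
/-!
Strong concavity together with `f′(p*) = 0` gives `f′(p)·(p − p*) ≤ −λ·(p − p*)²` on `I`, and
projecting onto `I` can only bring a point closer to `p* ∈ I`. Expanding the square of an
unprojected step of size `g_t/(λt)` therefore gives, after multiplying by `t(t−1)`,
`t(t−1)·e_{t+1}² ≤ (t−1)(t−2)·e_t² + (2/λ)(t−1)·δ_t·e_t + g_t²/λ²` for `e_t = p_t − p*`.
The weights `t(t−1)` make the first term on the right the left-hand side of the previous step,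
so these inequalities telescope from `t = 2`, where the weight `(t−1)(t−2)` vanishes.
-/

open Set Finset

theorem sq_max_min_sub_le {l u c : ℝ} (hc : c ∈ Icc l u) (x : ℝ) :
    (max l (min x u) - c) ^ 2 ≤ (x - c) ^ 2 := by
  refine sq_le_sq.mpr ?_
  calc |max l (min x u) - c| = |max (min x u) l - max (min c u) l| := by
        rw [max_comm, min_eq_left hc.2, max_eq_left hc.1]
    _ ≤ |min x u - min c u| := abs_max_sub_max_le_abs _ _ _
    _ ≤ |x - c| := by simpa using abs_min_sub_min_le_max x u c u

theorem deriv_sub_mul_sub_le_of_strongly_concave {s : Set ℝ} {f : ℝ → ℝ} {lam : ℝ}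
    (hconc : ∀ x ∈ s, ∀ y ∈ s, f y ≤ f x + deriv f x * (y - x) - lam / 2 * (y - x) ^ 2)
    {x y : ℝ} (hx : x ∈ s) (hy : y ∈ s) :
    (deriv f x - deriv f y) * (x - y) ≤ -lam * (x - y) ^ 2 := by
  linarith [hconc x hx y hy, hconc y hy x hx]

theorem clamp_iterate_mem_Icc {l u : ℝ} (hlu : l ≤ u) {p x : ℕ → ℝ}
    (hp2 : p 2 ∈ Icc l u) (hrec : ∀ t : ℕ, 2 ≤ t → p (t + 1) = max l (min (x t) u)) :
    ∀ t : ℕ, 2 ≤ t → p t ∈ Icc l u := by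
  intro t ht
  induction t, ht using Nat.le_induction with
  | base => exact hp2
  | succ n hn _ =>
    rw [hrec n hn]
    exact ⟨le_max_left _ _, max_le hlu (min_le_right _ _)⟩

theorem scaled_sq_error_step {lam n e e' d g : ℝ} (hlam : 0 < lam) (hn : 2 ≤ n)
    (hproj : e' ^ 2 ≤ (e + g / (lam * n)) ^ 2) (hd : d * e ≤ -lam * e ^ 2) :
    n * (n - 1) * e' ^ 2 ≤
      (n - 1) * (n - 2) * e ^ 2 + 2 / lam * ((n - 1) * (g - d) * e) + 1 / lam ^ 2 * g ^ 2 := by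
  set q := g / (lam * n) with hq
  have hg : g = lam * n * q := by rw [hq]; field_simp
  have hdrift : 2 / lam * ((n - 1) * (g - d) * e) =
      2 * n * (n - 1) * (q * e) - 2 * (n - 1) / lam * (d * e) := by
    rw [hg]; field_simp
  have hnoise : 1 / lam ^ 2 * g ^ 2 = n ^ 2 * q ^ 2 := by rw [hg]; field_simp
  have hcontract : 2 * (n - 1) / lam * (d * e) ≤ -(2 * (n - 1) * e ^ 2) :=
    calc 2 * (n - 1) / lam * (d * e) ≤ 2 * (n - 1) / lam * (-lam * e ^ 2) :=
          mul_le_mul_of_nonneg_left hd (div_nonneg (by linarith) hlam.le)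
      _ = -(2 * (n - 1) * e ^ 2) := by field_simp
  have hscaled : n * (n - 1) * e' ^ 2 ≤ n * (n - 1) * (e + q) ^ 2 :=
    mul_le_mul_of_nonneg_left hproj (by nlinarith)
  rw [hdrift, hnoise]
  nlinarith [sq_nonneg q]

theorem scaled_sq_error_le_sum {lam l u : ℝ} (hlam : 0 < lam) (hlu : l ≤ u) {f : ℝ → ℝ}
    (hconc : ∀ x ∈ Icc l u, ∀ y ∈ Icc l u,
      f y ≤ f x + deriv f x * (y - x) - lam / 2 * (y - x) ^ 2)
    {pstar : ℝ} (hps : pstar ∈ Icc l u) (hps' : deriv f pstar = 0)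
    {g p : ℕ → ℝ} (hp2 : p 2 ∈ Icc l u)
    (hrec : ∀ t : ℕ, 2 ≤ t → p (t + 1) = max l (min (p t + g t / (lam * (t : ℝ))) u))
    (t : ℕ) (ht : 2 ≤ t) :
    (t : ℝ) * (t - 1) * (p (t + 1) - pstar) ^ 2 ≤
      2 / lam * ∑ i ∈ Icc 2 t, ((i : ℝ) - 1) * (g i - deriv f (p i)) * (p i - pstar)
        + 1 / lam ^ 2 * ∑ i ∈ Icc 2 t, g i ^ 2 := by
  have hmem := clamp_iterate_mem_Icc hlu hp2 hrec
  have hstep (n : ℕ) (hn : 2 ≤ n) := by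
    refine scaled_sq_error_step (n := (n : ℝ)) (e := p n - pstar) (e' := p (n + 1) - pstar)
      (d := deriv f (p n)) (g := g n) hlam (by exact_mod_cast hn) ?_ ?_
    · rw [hrec n hn, sub_add_eq_add_sub]
      exact sq_max_min_sub_le hps _
    · simpa [hps'] using deriv_sub_mul_sub_le_of_strongly_concave hconc (hmem n hn) hps
  induction t, ht using Nat.le_induction with
  | base => simpa using hstep 2 le_rfl
  | succ n hn ih =>
    have h := hstep (n + 1) (by omega)
    rw [sum_Icc_succ_top (by omega), sum_Icc_succ_top (by omega)]
    push_cast at h ⊢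
    linarith

theorem projected_gradient_error_recursion_general
    (lam : ℝ) (hlam : 0 < lam)
    (l u : ℝ) (hlu : l ≤ u)
    (f : ℝ → ℝ)
    (hconc : ∀ x ∈ Set.Icc l u, ∀ y ∈ Set.Icc l u,
      f y ≤ f x + deriv f x * (y - x) - lam / 2 * (y - x) ^ 2)
    (pstar : ℝ) (hps : pstar ∈ Set.Icc l u) (hps' : deriv f pstar = 0)
    (g : ℕ → ℝ) (p : ℕ → ℝ) (hp2 : p 2 ∈ Set.Icc l u)
    (hrec : ∀ t : ℕ, 2 ≤ t → p (t + 1) = max l (min (p t + g t / (lam * (t : ℝ))) u)) :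
    ∀ t : ℕ, 2 ≤ t →
      (p (t + 1) - pstar) ^ 2 ≤
        (2 / (lam * (t : ℝ) * ((t : ℝ) - 1))) *
            ∑ i ∈ Finset.Icc 2 t, ((i : ℝ) - 1) * (g i - deriv f (p i)) * (p i - pstar)
          + (1 / (lam ^ 2 * (t : ℝ) * ((t : ℝ) - 1))) *
            ∑ i ∈ Finset.Icc 2 t, (g i) ^ 2 := by
  intro t ht
  have hweight : (0 : ℝ) < t * (t - 1) := by
    have : (2 : ℝ) ≤ t := by exact_mod_cast ht
    nlinarith
  have hsum := scaled_sq_error_le_sum hlam hlu hconc hps hps' hp2 hrec t ht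
  rw [← le_div_iff₀' hweight] at hsum
  refine hsum.trans_eq ?_
  field_simp

/-- Error recursion for projected stochastic gradient ascent on a `λ`-strongly concave
differentiable function over a closed interval `I = [ℓ, u]`: with iterates
`p_{t+1} = proj_I(p_t + g_t/(λ·t))` and gradient-estimation errors
`δ_t = g_t − f′(p_t)`, for every `t ≥ 2`,
`(p_{t+1} − p*)² ≤ (2/(λ·t·(t−1)))·Σ_{i=2}^{t} (i−1)·δ_i·(p_i − p*)
  + (1/(λ²·t·(t−1)))·Σ_{i=2}^{t} g_i²`. -/
theorem projected_gradient_error_recursion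
    (lam : ℝ) (hlam : 0 < lam)
    (l u : ℝ) (hlu : l ≤ u)
    (f : ℝ → ℝ)
    (hdiff : ∀ x ∈ Set.Icc l u, DifferentiableAt ℝ f x)
    (hconc : ∀ x ∈ Set.Icc l u, ∀ y ∈ Set.Icc l u,
      f y ≤ f x + deriv f x * (y - x) - lam / 2 * (y - x) ^ 2)
    (pstar : ℝ) (hps : pstar ∈ Set.Icc l u) (hps' : deriv f pstar = 0)
    (g : ℕ → ℝ) (p : ℕ → ℝ) (hp2 : p 2 ∈ Set.Icc l u)
    (hrec : ∀ t : ℕ, 2 ≤ t → p (t + 1) = max l (min (p t + g t / (lam * (t : ℝ))) u)) :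
    ∀ t : ℕ, 2 ≤ t →
      (p (t + 1) - pstar) ^ 2 ≤
        (2 / (lam * (t : ℝ) * ((t : ℝ) - 1))) *
            ∑ i ∈ Finset.Icc 2 t, ((i : ℝ) - 1) * (g i - deriv f (p i)) * (p i - pstar)
          + (1 / (lam ^ 2 * (t : ℝ) * ((t : ℝ) - 1))) *
            ∑ i ∈ Finset.Icc 2 t, (g i) ^ 2 :=
  projected_gradient_error_recursion_general lam hlam l u hlu f hconc pstar hps hps' g p hp2 hrec
end
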